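/- arXiv:1002.2341 — 6 statements merged into one kernel-verified Lean document; each statement's English description precedes it below -/
import Mathlib

section
/- Under the setup of the previous statement, assume additionally that E[e^{r Y_0}] + E[e^{r Y_0'}] + E[e^{r Y_1}] ≤ e^{υ*(r)} < ∞ for some r > 0. Then E[e^{r σ_1}] ≤ 3 e^{υ*(r)}, where σ_1 = inf{l ≥ 1 : W_l = 1}. -/
open MeasureTheory ProbabilityTheory

noncomputable def renewalSum (Y : ℕ → Ω → ℕ) (k : ℕ) (ω : Ω) : ℕ :=
  ∑ i ∈ Finset.range (k + 1), Y i ω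

noncomputable def renewalT (Y : ℕ → Ω → ℕ) (n : ℕ) (ω : Ω) : ℕ :=
  sInf {k | n < renewalSum Y k ω}

noncomputable def overshoot (Y : ℕ → Ω → ℕ) (n : ℕ) (ω : Ω) : ℕ :=
  renewalSum Y (renewalT Y n ω) ω - n

noncomputable def sigmaOne (Y : ℕ → Ω → ℕ) (ω : Ω) : ℕ :=
  sInf {l | 1 ≤ l ∧ overshoot Y l ω = 1}

lemma sigmaOne_le_max {Ω : Type*} (Y : ℕ → Ω → ℕ) (ω : Ω)
    (h1 : 1 ≤ Y 1 ω) (h2 : 1 ≤ Y 2 ω) :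
    sigmaOne Y ω ≤ max (Y 0 ω) (max (Y 1 ω) (Y 2 ω)) := by
  have hS0 : renewalSum Y 0 ω = Y 0 ω := by simp [renewalSum]
  have hS1 : renewalSum Y 1 ω = Y 0 ω + Y 1 ω := by
    simp [renewalSum, Finset.sum_range_succ]
  have hS2 : renewalSum Y 2 ω = Y 0 ω + Y 1 ω + Y 2 ω := by
    simp [renewalSum, Finset.sum_range_succ]
  rcases le_or_gt 2 (Y 0 ω) with h | h
  · -- witness l = Y 0 ω - 1, T = 0
    have hT : renewalT Y (Y 0 ω - 1) ω = 0 := by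
      apply Nat.sInf_eq_zero.mpr; left
      simp only [Set.mem_setOf_eq, hS0]; omega
    have hov : overshoot Y (Y 0 ω - 1) ω = 1 := by
      simp only [overshoot, hT, hS0]; omega
    have hle : sigmaOne Y ω ≤ Y 0 ω - 1 := Nat.sInf_le ⟨by omega, hov⟩
    omega
  · rcases le_or_gt 2 (Y 0 ω + Y 1 ω) with h' | h'
    · -- witness l = Y 0 ω + Y 1 ω - 1, T = 1
      set l := Y 0 ω + Y 1 ω - 1 with hl
      have h0notin : (0 : ℕ) ∉ {k | l < renewalSum Y k ω} := by
        simp only [Set.mem_setOf_eq, hS0]; omega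
      have h1in : (1 : ℕ) ∈ {k | l < renewalSum Y k ω} := by
        simp only [Set.mem_setOf_eq, hS1]; omega
      have hT : renewalT Y l ω = 1 := by
        refine le_antisymm (Nat.sInf_le h1in) ?_
        rcases Nat.eq_zero_or_pos (sInf {k | l < renewalSum Y k ω}) with hz | hpos
        · exact absurd (hz ▸ Nat.sInf_mem ⟨1, h1in⟩) h0notin
        · exact hpos
      have hov : overshoot Y l ω = 1 := by
        simp only [overshoot, renewalT] at *
        rw [hT, hS1]; omega
      have hle : sigmaOne Y ω ≤ l := Nat.sInf_le ⟨by omega, hov⟩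
      omega
    · -- Y 0 ω = 0, Y 1 ω = 1; witness l = Y 2 ω, T = 2
      have hy0 : Y 0 ω = 0 := by omega
      have hy1 : Y 1 ω = 1 := by omega
      set l := Y 2 ω with hl
      have h0notin : (0 : ℕ) ∉ {k | l < renewalSum Y k ω} := by
        simp only [Set.mem_setOf_eq, hS0]; omega
      have h1notin : (1 : ℕ) ∉ {k | l < renewalSum Y k ω} := by
        simp only [Set.mem_setOf_eq, hS1]; omega
      have h2in : (2 : ℕ) ∈ {k | l < renewalSum Y k ω} := by
        simp only [Set.mem_setOf_eq, hS2]; omega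
      have hT : renewalT Y l ω = 2 := by
        refine le_antisymm (Nat.sInf_le h2in) ?_
        show 2 ≤ sInf {k | l < renewalSum Y k ω}
        have hmem := Nat.sInf_mem (⟨2, h2in⟩ : Set.Nonempty {k | l < renewalSum Y k ω})
        by_contra hlt
        push_neg at hlt
        have hcase : sInf {k | l < renewalSum Y k ω} = 0
            ∨ sInf {k | l < renewalSum Y k ω} = 1 := by omega
        rcases hcase with hm | hm
        · exact h0notin (hm ▸ hmem)
        · exact h1notin (hm ▸ hmem)
      have hov : overshoot Y l ω = 1 := by
        simp only [overshoot, renewalT] at *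
        rw [hT, hS2]; omega
      have hle : sigmaOne Y ω ≤ l := Nat.sInf_le ⟨by omega, hov⟩
      omega

/-- if `E e^{rY₀} + E e^{rY₀'} + E e^{rY₁} ≤ e^{υ}` then
`E e^{r σ₁} ≤ 3 e^{υ}`. -/
theorem sigmaOne_exp_moment
    {Ω : Type*} [MeasurableSpace Ω] (μ : Measure Ω) [IsProbabilityMeasure μ]
    (Y : ℕ → Ω → ℕ) (Y' : Ω → ℕ)
    (hmeas : ∀ j, Measurable (Y j)) (hmeas' : Measurable Y')
    (hindep : iIndepFun Y μ)
    (hident : ∀ j, 1 ≤ j → Measure.map (Y j) μ = Measure.map (Y 1) μ)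
    (a p : ℕ → ENNReal)
    (ha : ∀ k, a k = μ {ω | Y 0 ω = k})
    (hp : ∀ k, p k = μ {ω | Y 1 ω = k})
    (ha0 : 0 < a 0) (hp0 : p 0 = 0)
    (r υ : ℝ) (hr : 0 < r)
    (hexp : ∫⁻ ω, ENNReal.ofReal (Real.exp (r * Y 0 ω)) ∂μ
          + ∫⁻ ω, ENNReal.ofReal (Real.exp (r * Y' ω)) ∂μ
          + ∫⁻ ω, ENNReal.ofReal (Real.exp (r * Y 1 ω)) ∂μ
        ≤ ENNReal.ofReal (Real.exp υ)) :
    ∫⁻ ω, ENNReal.ofReal (Real.exp (r * sigmaOne Y ω)) ∂μ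
      ≤ 3 * ENNReal.ofReal (Real.exp υ) := by
  -- F : ℕ → ℝ≥0∞
  set F : ℕ → ENNReal := fun n => ENNReal.ofReal (Real.exp (r * n)) with hF
  have hFmeas : Measurable F := measurable_from_top
  -- a.e., Y 1 ω ≥ 1 and Y 2 ω ≥ 1
  have hY1 : μ {ω | Y 1 ω = 0} = 0 := by rw [← hp 0]; exact hp0
  have hY2 : μ {ω | Y 2 ω = 0} = 0 := by
    have hmap := hident 2 (by norm_num)
    have h2 : μ {ω | Y 2 ω = 0} = (Measure.map (Y 2) μ) {0} := by
      rw [Measure.map_apply (hmeas 2) (measurableSet_singleton 0)]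
      rfl
    have h1 : μ {ω | Y 1 ω = 0} = (Measure.map (Y 1) μ) {0} := by
      rw [Measure.map_apply (hmeas 1) (measurableSet_singleton 0)]
      rfl
    rw [h2, hmap, ← h1, hY1]
  have hae : ∀ᵐ ω ∂μ, 1 ≤ Y 1 ω ∧ 1 ≤ Y 2 ω := by
    have e1 : ∀ᵐ ω ∂μ, Y 1 ω ≠ 0 := by
      rw [MeasureTheory.ae_iff]; simpa using hY1
    have e2 : ∀ᵐ ω ∂μ, Y 2 ω ≠ 0 := by
      rw [MeasureTheory.ae_iff]; simpa using hY2
    filter_upwards [e1, e2] with ω w1 w2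
    exact ⟨Nat.one_le_iff_ne_zero.mpr w1, Nat.one_le_iff_ne_zero.mpr w2⟩
  -- pointwise a.e. bound
  have hpt : ∀ᵐ ω ∂μ, F (sigmaOne Y ω) ≤ F (Y 0 ω) + F (Y 1 ω) + F (Y 2 ω) := by
    filter_upwards [hae] with ω hω
    have hmax := sigmaOne_le_max Y ω hω.1 hω.2
    have key : Real.exp (r * sigmaOne Y ω) ≤
        Real.exp (r * Y 0 ω) + Real.exp (r * Y 1 ω) + Real.exp (r * Y 2 ω) := by
      have hbd : Real.exp (r * sigmaOne Y ω) ≤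
          Real.exp (r * Y 0 ω) ∨ Real.exp (r * sigmaOne Y ω) ≤ Real.exp (r * Y 1 ω)
          ∨ Real.exp (r * sigmaOne Y ω) ≤ Real.exp (r * Y 2 ω) := by
        rcases max_cases (Y 0 ω) (max (Y 1 ω) (Y 2 ω)) with ⟨he, _⟩ | ⟨he, _⟩
        · left
          apply Real.exp_le_exp.mpr
          apply mul_le_mul_of_nonneg_left _ hr.le
          exact_mod_cast he ▸ hmax
        · rw [he] at hmax
          rcases max_cases (Y 1 ω) (Y 2 ω) with ⟨he2, _⟩ | ⟨he2, _⟩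
          · right; left
            apply Real.exp_le_exp.mpr
            apply mul_le_mul_of_nonneg_left _ hr.le
            exact_mod_cast he2 ▸ hmax
          · right; right
            apply Real.exp_le_exp.mpr
            apply mul_le_mul_of_nonneg_left _ hr.le
            exact_mod_cast he2 ▸ hmax
      have p0 := Real.exp_pos (r * Y 0 ω)
      have p1 := Real.exp_pos (r * Y 1 ω)
      have p2 := Real.exp_pos (r * Y 2 ω)
      rcases hbd with h | h | h <;> linarith
    calc F (sigmaOne Y ω) ≤ ENNReal.ofReal
          (Real.exp (r * Y 0 ω) + Real.exp (r * Y 1 ω) + Real.exp (r * Y 2 ω)) :=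
            ENNReal.ofReal_le_ofReal key
      _ = F (Y 0 ω) + F (Y 1 ω) + F (Y 2 ω) := by
          rw [ENNReal.ofReal_add (by positivity) (Real.exp_nonneg _),
            ENNReal.ofReal_add (Real.exp_nonneg _) (Real.exp_nonneg _)]
  -- integrate
  have hint : ∫⁻ ω, F (sigmaOne Y ω) ∂μ
      ≤ ∫⁻ ω, (F (Y 0 ω) + F (Y 1 ω) + F (Y 2 ω)) ∂μ := lintegral_mono_ae hpt
  have hmF : ∀ j : ℕ, Measurable fun ω => F (Y j ω) := fun j => hFmeas.comp (hmeas j)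
  have hsplit : ∫⁻ ω, (F (Y 0 ω) + F (Y 1 ω) + F (Y 2 ω)) ∂μ
      = ∫⁻ ω, F (Y 0 ω) ∂μ + ∫⁻ ω, F (Y 1 ω) ∂μ + ∫⁻ ω, F (Y 2 ω) ∂μ := by
    rw [lintegral_add_right _ (hmF 2), lintegral_add_right _ (hmF 1)]
  have hY2Y1 : ∫⁻ ω, F (Y 2 ω) ∂μ = ∫⁻ ω, F (Y 1 ω) ∂μ := by
    rw [← lintegral_map hFmeas (hmeas 2), ← lintegral_map hFmeas (hmeas 1),
      hident 2 (by norm_num)]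
  have hb0 : ∫⁻ ω, F (Y 0 ω) ∂μ ≤ ENNReal.ofReal (Real.exp υ) :=
    le_trans (le_trans (le_add_right le_rfl) (le_add_right le_rfl)) hexp
  have hb1 : ∫⁻ ω, F (Y 1 ω) ∂μ ≤ ENNReal.ofReal (Real.exp υ) :=
    le_trans (le_add_left le_rfl) hexp
  calc ∫⁻ ω, F (sigmaOne Y ω) ∂μ
      ≤ ∫⁻ ω, F (Y 0 ω) ∂μ + ∫⁻ ω, F (Y 1 ω) ∂μ + ∫⁻ ω, F (Y 2 ω) ∂μ := by
        rw [← hsplit]; exact hint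
    _ = ∫⁻ ω, F (Y 0 ω) ∂μ + ∫⁻ ω, F (Y 1 ω) ∂μ + ∫⁻ ω, F (Y 1 ω) ∂μ := by rw [hY2Y1]
    _ ≤ ENNReal.ofReal (Real.exp υ) + ENNReal.ofReal (Real.exp υ)
        + ENNReal.ofReal (Real.exp υ) := add_le_add (add_le_add hb0 hb1) hb1
    _ = 3 * ENNReal.ofReal (Real.exp υ) := by ring
end

section
/- Let (Φ_n)_{n≥0} be a homogeneous Markov chain on a measurable space (X, B(X)) and V : X → [1,∞) a function such that E_x[V(Φ_1)] ≤ (1−ρ)V(x) + D·1_C(x) for all x, where 0 < ρ < 1, D > 0, and C ∈ B(X). Then for any 0 < r < −ln(1−ρ), sup_{x∈X} U_C(x,r,V)/V(x) ≤ ((1−ρ)e^r + D e^r)/(1 − (1−ρ)e^r), where U_C(x,r,V) = E_x[ sum_{j=1}^{τ_C} e^{rj} V(Φ_j) ] and τ_C = inf{n ≥ 1 : Φ_n ∈ C}. -/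
/-!
Let `b_j = E_x[V(Φ_j); j ≤ τ_C]`. On `{j + 1 ≤ τ_C}` the chain is outside `C` at time `j ≥ 1`,
so the Markov property and the drift condition off `C` give `b_{j+1} ≤ (1 - ρ) b_j`, while
`b_1 = E_x V(Φ_1) ≤ (1 - ρ) V(x) + D`. Hence `U_C(x, r, V) = ∑_{j ≥ 1} e^{rj} b_j` is dominated
by a geometric series of ratio `(1 - ρ) e^r < 1`, and `V ≥ 1` turns `D` into `D V(x)`.
-/

open MeasureTheory ProbabilityTheory

variable {X : Type*} [MeasurableSpace X]

/-- `Pr` is the family of path measures of the homogeneous Markov chain with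
transition kernel `K`: `Pr x` is a probability on trajectories, starts at `x`,
and satisfies the Markov property with one-step kernel `K`. -/
def IsMarkovFamily (K : Kernel X X) (Pr : X → Measure (ℕ → X)) : Prop :=
  (∀ x, IsProbabilityMeasure (Pr x)) ∧
  (∀ x, Pr x {ω | ω 0 = x} = 1) ∧
  (∀ x (n : ℕ) (B : Set (Fin (n + 1) → X)), MeasurableSet B →
    ∀ f : X → ENNReal, Measurable f →
      ∫⁻ ω in {ω | (fun i : Fin (n + 1) => ω i.1) ∈ B}, f (ω (n + 1)) ∂ Pr x
        = ∫⁻ ω in {ω | (fun i : Fin (n + 1) => ω i.1) ∈ B},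
            ∫⁻ y, f y ∂ (K (ω n)) ∂ Pr x)

/-- First hitting time (at time ≥ 1) of the set `C`, valued in `ℕ∞`. -/
noncomputable def hitTime (C : Set X) (ω : ℕ → X) : ℕ∞ :=
  sInf {m : ℕ∞ | ∃ k : ℕ, m = k ∧ 1 ≤ k ∧ ω k ∈ C}

/-- `U_A(x,s,V) = E_x[∑_{j=1}^{τ_A} e^{sj} V(Φ_j)]`. -/
noncomputable def hitSum (Pr : X → Measure (ℕ → X)) (A : Set X) (s : ℝ)
    (V : X → ENNReal) (x : X) : ENNReal :=
  ∫⁻ ω, ∑' j : ℕ,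
    Set.indicator {ω' : ℕ → X | 1 ≤ j ∧ (j : ℕ∞) ≤ hitTime A ω'}
      (fun _ => ENNReal.ofReal (Real.exp (s * j)) * V (ω j)) ω ∂ Pr x

open scoped ENNReal

lemma Real.mul_exp_lt_one_of_lt_neg_log {a r : ℝ} (ha : 0 < a) (hr : r < -Real.log a) :
    a * Real.exp r < 1 := by
  have : Real.exp r < a⁻¹ := by
    rw [← Real.exp_log (inv_pos.2 ha), Real.log_inv]
    exact Real.exp_lt_exp.2 hr
  calc a * Real.exp r < a * a⁻¹ := by gcongr
    _ = 1 := mul_inv_cancel₀ ha.ne'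

def notHitBefore {α : Type*} (C : Set α) (j : ℕ) : Set (ℕ → α) :=
  {ω | ∀ k, 1 ≤ k → k < j → ω k ∉ C}

section notHitBefore

variable {α : Type*} {C : Set α}

lemma natCast_le_hitTime_iff {ω : ℕ → α} {j : ℕ} :
    (j : ℕ∞) ≤ hitTime C ω ↔ ω ∈ notHitBefore C j := by
  simp only [hitTime, le_sInf_iff, Set.mem_ofPred_eq, notHitBefore]
  constructor
  · rintro h k hk1 hkj hkC
    have : j ≤ k := by exact_mod_cast h k ⟨k, rfl, hk1, hkC⟩
    omega
  · rintro h _ ⟨k, rfl, hk1, hkC⟩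
    by_contra hlt
    exact h k hk1 (by exact_mod_cast not_le.1 hlt) hkC

lemma notHitBefore_one : notHitBefore C 1 = Set.univ := by
  ext ω
  simp only [notHitBefore, Set.mem_ofPred_eq, Set.mem_univ, iff_true]
  omega

lemma notHitBefore_succ_subset (j : ℕ) : notHitBefore C (j + 1) ⊆ notHitBefore C j :=
  fun _ hω k hk1 hkj => hω k hk1 (by omega)

lemma notHitBefore_succ_eq_preimage (n : ℕ) :
    notHitBefore C (n + 1) =
      {ω | (fun i : Fin (n + 1) => ω i.1) ∈ {v : Fin (n + 1) → α | ∀ k, 1 ≤ k.1 → v k ∉ C}} := by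
  ext ω
  simp only [notHitBefore, Set.mem_ofPred_eq]
  exact ⟨fun h k hk => h k hk k.2, fun h k hk hkn => h ⟨k, hkn⟩ hk⟩

end notHitBefore

lemma measurableSet_notHitBefore {C : Set X} (hC : MeasurableSet C) (j : ℕ) :
    MeasurableSet (notHitBefore C j) :=
  measurableSet_setOfPred.2 <| Measurable.forall fun k =>
    measurable_const.imp <| measurable_const.imp <|
      measurableSet_setOfPred.1 (hC.compl.preimage (measurable_pi_apply k))

lemma measurableSet_notHitBefore_fin {C : Set X} (hC : MeasurableSet C) (n : ℕ) :
    MeasurableSet {v : Fin (n + 1) → X | ∀ k, 1 ≤ k.1 → v k ∉ C} :=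
  measurableSet_setOfPred.2 <| Measurable.forall fun k =>
    measurable_const.imp <| measurableSet_setOfPred.1 (hC.compl.preimage (measurable_pi_apply k))

namespace IsMarkovFamily

variable {K : Kernel X X} {Pr : X → Measure (ℕ → X)}

lemma ae_comp_eval_zero_eq (h : IsMarkovFamily K Pr) {β : Type*} [MeasurableSpace β]
    [MeasurableSingletonClass β] {f : X → β} (hf : Measurable f) (x : X) :
    ∀ᵐ ω ∂Pr x, f (ω 0) = f x := by
  have := h.1 x
  -- `{ω | ω 0 = x}` need not be measurable, so pass to the measurable event `{f (ω 0) = f x}`.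
  have hmeas : MeasurableSet {ω : ℕ → X | f (ω 0) = f x} :=
    (hf.comp (measurable_pi_apply 0)) (measurableSet_singleton _)
  rw [ae_iff_measure_eq hmeas.nullMeasurableSet, measure_univ]
  refine le_antisymm prob_le_one ?_
  calc 1 = Pr x {ω | ω 0 = x} := (h.2.1 x).symm
    _ ≤ _ := measure_mono fun ω (hω : ω 0 = x) => by simp [hω]

lemma lintegral_comp_eval_zero (h : IsMarkovFamily K Pr) {f : X → ℝ≥0∞} (hf : Measurable f)
    (x : X) : ∫⁻ ω, f (ω 0) ∂Pr x = f x := by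
  have := h.1 x
  rw [lintegral_congr_ae (h.ae_comp_eval_zero_eq hf x), lintegral_const, measure_univ, mul_one]

lemma lintegral_comp_eval_one (h : IsMarkovFamily K Pr) {f : X → ℝ≥0∞} (hf : Measurable f)
    (x : X) : ∫⁻ ω, f (ω 1) ∂Pr x = ∫⁻ y, f y ∂K x := by
  have hmarkov := h.2.2 x 0 Set.univ MeasurableSet.univ f hf
  simp only [Set.mem_univ, Set.ofPred_true, Measure.restrict_univ] at hmarkov
  rw [hmarkov, h.lintegral_comp_eval_zero hf.lintegral_kernel]

variable {C : Set X} {V : X → ℝ≥0∞} {c : ℝ≥0∞}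

lemma setLIntegral_notHitBefore_succ_le (h : IsMarkovFamily K Pr) (hC : MeasurableSet C)
    (hV : Measurable V) (hdrift : ∀ y ∉ C, ∫⁻ z, V z ∂K y ≤ c * V y) (x : X) {j : ℕ}
    (hj : 1 ≤ j) :
    ∫⁻ ω in notHitBefore C (j + 1), V (ω (j + 1)) ∂Pr x
      ≤ c * ∫⁻ ω in notHitBefore C j, V (ω j) ∂Pr x := by
  have hmarkov := h.2.2 x j _ (measurableSet_notHitBefore_fin hC j) V hV
  rw [← notHitBefore_succ_eq_preimage] at hmarkov
  calc ∫⁻ ω in notHitBefore C (j + 1), V (ω (j + 1)) ∂Pr x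
      = ∫⁻ ω in notHitBefore C (j + 1), ∫⁻ z, V z ∂K (ω j) ∂Pr x := hmarkov
    _ ≤ ∫⁻ ω in notHitBefore C (j + 1), c * V (ω j) ∂Pr x :=
      setLIntegral_mono' (measurableSet_notHitBefore hC _) fun ω hω =>
        hdrift (ω j) (hω j hj j.lt_succ_self)
    _ = c * ∫⁻ ω in notHitBefore C (j + 1), V (ω j) ∂Pr x :=
      lintegral_const_mul c (hV.comp (measurable_pi_apply j))
    _ ≤ c * ∫⁻ ω in notHitBefore C j, V (ω j) ∂Pr x := by
      gcongr
      exact notHitBefore_succ_subset j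

lemma setLIntegral_notHitBefore_le_pow (h : IsMarkovFamily K Pr) (hC : MeasurableSet C)
    (hV : Measurable V) (hdrift : ∀ y ∉ C, ∫⁻ z, V z ∂K y ≤ c * V y) (x : X) (n : ℕ) :
    ∫⁻ ω in notHitBefore C (n + 1), V (ω (n + 1)) ∂Pr x ≤ c ^ n * ∫⁻ y, V y ∂K x := by
  induction n with
  | zero =>
    rw [notHitBefore_one, Measure.restrict_univ, h.lintegral_comp_eval_one hV, pow_zero, one_mul]
  | succ n ih =>
    calc _ ≤ c * ∫⁻ ω in notHitBefore C (n + 1), V (ω (n + 1)) ∂Pr x :=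
          h.setLIntegral_notHitBefore_succ_le hC hV hdrift x n.succ_pos
      _ ≤ c * (c ^ n * ∫⁻ y, V y ∂K x) := by gcongr
      _ = c ^ (n + 1) * ∫⁻ y, V y ∂K x := by ring

end IsMarkovFamily

lemma hitSum_eq_tsum (Pr : X → Measure (ℕ → X)) {C : Set X} (hC : MeasurableSet C)
    {V : X → ℝ≥0∞} (hV : Measurable V) (s : ℝ) (x : X) :
    hitSum Pr C s V x = ∑' n : ℕ, ENNReal.ofReal (Real.exp (s * (n + 1)))
      * ∫⁻ ω in notHitBefore C (n + 1), V (ω (n + 1)) ∂Pr x := by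
  have hterm : ∀ (j : ℕ) (ω : ℕ → X),
      {ω' | 1 ≤ j ∧ (j : ℕ∞) ≤ hitTime C ω'}.indicator
        (fun _ => ENNReal.ofReal (Real.exp (s * j)) * V (ω j)) ω
      = {ω | 1 ≤ j ∧ ω ∈ notHitBefore C j}.indicator
          (fun ω => ENNReal.ofReal (Real.exp (s * j)) * V (ω j)) ω := by
    intro j ω
    simp only [natCast_le_hitTime_iff]
    rfl
  have hmeas : ∀ j : ℕ, MeasurableSet {ω : ℕ → X | 1 ≤ j ∧ ω ∈ notHitBefore C j} := fun j =>
    (MeasurableSet.const _).inter (measurableSet_notHitBefore hC j)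
  unfold hitSum
  simp only [hterm]
  rw [lintegral_tsum fun j => (Measurable.indicator (by fun_prop) (hmeas j)).aemeasurable,
    tsum_eq_zero_add' ENNReal.summable]
  simp only [nonpos_iff_eq_zero, one_ne_zero, false_and, Set.ofPred_false, Set.indicator_empty,
    lintegral_zero, zero_add]
  refine tsum_congr fun n => ?_
  simp only [le_add_iff_nonneg_left, zero_le, true_and, Set.ofPred_mem_eq, Nat.cast_add_one]
  rw [lintegral_indicator (measurableSet_notHitBefore hC _), lintegral_const_mul _ (by fun_prop)]

lemma IsMarkovFamily.hitSum_le_of_drift {K : Kernel X X} {Pr : X → Measure (ℕ → X)}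
    (h : IsMarkovFamily K Pr) {C : Set X} (hC : MeasurableSet C) {V : X → ℝ≥0∞}
    (hV : Measurable V) {c : ℝ≥0∞} (hdrift : ∀ y ∉ C, ∫⁻ z, V z ∂K y ≤ c * V y) (s : ℝ)
    (x : X) :
    hitSum Pr C s V x ≤ (1 - c * ENNReal.ofReal (Real.exp s))⁻¹
      * (ENNReal.ofReal (Real.exp s) * ∫⁻ y, V y ∂K x) := by
  set E := ENNReal.ofReal (Real.exp s)
  have hexp : ∀ n : ℕ, ENNReal.ofReal (Real.exp (s * (n + 1))) = E ^ (n + 1) := fun n => by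
    rw [← ENNReal.ofReal_pow (Real.exp_pos s).le, ← Real.exp_nat_mul, mul_comm]
    push_cast
    rfl
  calc hitSum Pr C s V x
      = ∑' n : ℕ, E ^ (n + 1) * ∫⁻ ω in notHitBefore C (n + 1), V (ω (n + 1)) ∂Pr x := by
        simp only [hitSum_eq_tsum Pr hC hV, hexp]
    _ ≤ ∑' n : ℕ, (c * E) ^ n * (E * ∫⁻ y, V y ∂K x) := ENNReal.tsum_le_tsum fun n =>
        calc _ ≤ E ^ (n + 1) * (c ^ n * ∫⁻ y, V y ∂K x) := by
              gcongr
              exact h.setLIntegral_notHitBefore_le_pow hC hV hdrift x n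
          _ = (c * E) ^ n * (E * ∫⁻ y, V y ∂K x) := by ring
    _ = (1 - c * E)⁻¹ * (E * ∫⁻ y, V y ∂K x) := by
        rw [ENNReal.tsum_mul_right, ENNReal.tsum_geometric]

theorem drift_implies_exponential_return_sum_general
    (K : Kernel X X) (Pr : X → Measure (ℕ → X))
    (hchain : IsMarkovFamily K Pr)
    (C : Set X) (hC : MeasurableSet C)
    (V : X → ENNReal) (hVmeas : Measurable V) (hV1 : ∀ x, 1 ≤ V x)
    (ρ D : ℝ) (hρ1 : ρ < 1) (hD : 0 < D)
    (hdrift : ∀ x, ∫⁻ y, V y ∂ K x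
        ≤ ENNReal.ofReal (1 - ρ) * V x
          + ENNReal.ofReal D * C.indicator 1 x)
    (r : ℝ) (hr' : r < -Real.log (1 - ρ)) :
    ∀ x, hitSum Pr C r V x
      ≤ ENNReal.ofReal
          (((1 - ρ) * Real.exp r + D * Real.exp r) / (1 - (1 - ρ) * Real.exp r))
        * V x := by
  intro x
  have hρ : 0 < 1 - ρ := sub_pos.2 hρ1
  have hβ : (1 - ρ) * Real.exp r < 1 := Real.mul_exp_lt_one_of_lt_neg_log hρ hr'
  have hout : ∀ y ∉ C, ∫⁻ z, V z ∂K y ≤ ENNReal.ofReal (1 - ρ) * V y := fun y hy => by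
    simpa [hy] using hdrift y
  have hstart : ∫⁻ y, V y ∂K x ≤ (ENNReal.ofReal (1 - ρ) + ENNReal.ofReal D) * V x := by
    refine (hdrift x).trans ?_
    rw [add_mul]
    gcongr
    exact (Set.indicator_le_self' (fun _ _ => zero_le_one) x).trans (hV1 x)
  calc hitSum Pr C r V x
      ≤ (1 - ENNReal.ofReal (1 - ρ) * ENNReal.ofReal (Real.exp r))⁻¹
          * (ENNReal.ofReal (Real.exp r) * ∫⁻ y, V y ∂K x) :=
        hchain.hitSum_le_of_drift hC hVmeas hout r x
    _ ≤ (1 - ENNReal.ofReal (1 - ρ) * ENNReal.ofReal (Real.exp r))⁻¹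
          * (ENNReal.ofReal (Real.exp r)
            * ((ENNReal.ofReal (1 - ρ) + ENNReal.ofReal D) * V x)) := by
        gcongr
    _ = _ := by
        rw [← mul_assoc (ENNReal.ofReal _), ← mul_assoc]
        congr 1
        rw [← ENNReal.ofReal_add hρ.le hD.le, ← ENNReal.ofReal_mul (Real.exp_pos r).le,
          ← ENNReal.ofReal_mul hρ.le, ← ENNReal.ofReal_one,
          ← ENNReal.ofReal_sub _ (by positivity), ← ENNReal.ofReal_inv_of_pos (sub_pos.2 hβ),
          ← ENNReal.ofReal_mul (inv_pos.2 (sub_pos.2 hβ)).le, div_eq_inv_mul]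
        ring_nf

/-- under the drift condition
`E_x V(Φ_1) ≤ (1−ρ)V(x) + D 1_C(x)`, for any `0 < r < −ln(1−ρ)`,
`U_C(x,r,V) ≤ ((1−ρ)eʳ + Deʳ)/(1−(1−ρ)eʳ) · V(x)` for every `x`. -/
theorem drift_implies_exponential_return_sum
    (K : Kernel X X) [IsMarkovKernel K] (Pr : X → Measure (ℕ → X))
    (hchain : IsMarkovFamily K Pr)
    (C : Set X) (hC : MeasurableSet C)
    (V : X → ENNReal) (hVmeas : Measurable V) (hV1 : ∀ x, 1 ≤ V x)
    (ρ D : ℝ) (hρ : 0 < ρ) (hρ1 : ρ < 1) (hD : 0 < D)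
    (hdrift : ∀ x, ∫⁻ y, V y ∂ K x
        ≤ ENNReal.ofReal (1 - ρ) * V x
          + ENNReal.ofReal D * C.indicator 1 x)
    (r : ℝ) (hr : 0 < r) (hr' : r < -Real.log (1 - ρ)) :
    ∀ x, hitSum Pr C r V x
      ≤ ENNReal.ofReal
          (((1 - ρ) * Real.exp r + D * Real.exp r) / (1 - (1 - ρ) * Real.exp r))
        * V x :=
  drift_implies_exponential_return_sum_general K Pr hchain C hC V hVmeas hV1 ρ D hρ1 hD hdrift r hr'
end

section
/- Suppose a homogeneous Markov chain Φ on (X,B(X)) is ψ-irreducible and contains an accessible atom α (i.e. P(x,Γ) = P(y,Γ) for all x,y ∈ α and all Γ ∈ B(X)) with E_α[τ_α] < ∞, where τ_α = inf{k ≥ 1 : Φ_k ∈ α}. Then the measure π defined by π(Γ) = (1/E_α[τ_α]) · E_α[ sum_{j=1}^{τ_α} 1{Φ_j ∈ Γ} ] is an invariant probability measure for Φ. -/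
open MeasureTheory ProbabilityTheory

variable {X : Type*} [MeasurableSpace X]

/-- `E_α[τ_α]`, written as `∑_{j≥1} P(j ≤ τ_α)` integrated. -/
noncomputable def atomReturnExp (Pr : X → Measure (ℕ → X)) (α : Set X)
    (x₀ : X) : ENNReal :=
  ∫⁻ ω, ∑' j : ℕ,
    Set.indicator {ω' : ℕ → X | 1 ≤ j ∧ (j : ℕ∞) ≤ hitTime α ω'}
      (fun _ => (1 : ENNReal)) ω ∂ Pr x₀

/-- The (unnormalized) occupation measure of one cycle at the atom:
`Γ ↦ E_α[∑_{j=1}^{τ_α} 1{Φ_j ∈ Γ}]`. -/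
noncomputable def cycleOccupation (Pr : X → Measure (ℕ → X)) (α : Set X)
    (x₀ : X) : Measure X :=
  Measure.sum fun j : ℕ =>
    Measure.map (fun ω => ω j)
      ((Pr x₀).restrict {ω | 1 ≤ j ∧ (j : ℕ∞) ≤ hitTime α ω})

/-! The return-time sum `∑ⱼ Pr(1 ≤ j ≤ τ_α)` is finite, so the chain started in `α` returns
to `α` almost surely. Write `aⱼ = Pr(Φⱼ ∈ Γ, 1 ≤ j ≤ τ_α)`, so that the cycle occupation of `Γ`
is `∑ⱼ aⱼ`. By the Markov property its image under the kernel is `∑ⱼ Pr(Φⱼ₊₁ ∈ Γ, 1 ≤ j ≤ τ_α)`;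
splitting `{j ≤ τ_α}` into `{j + 1 ≤ τ_α}` and `{τ_α = j}` turns this into
`∑ⱼ₌₂ aⱼ + ∑ⱼ Pr(Φⱼ₊₁ ∈ Γ, τ_α = j)`. On `{τ_α = j}` the chain sits in the atom at time `j`, so
the last sum is `P(α, Γ) · Pr(τ_α < ∞) = P(α, Γ) = a₁`. -/

section HitTime

variable {S : Type*} {C : Set S} {ω : ℕ → S}

lemma natCast_le_hitTime_iff_s10 {j : ℕ} :
    (j : ℕ∞) ≤ hitTime C ω ↔ ∀ k, 1 ≤ k → k < j → ω k ∉ C := by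
  unfold hitTime
  rw [le_sInf_iff]
  constructor
  · intro h k hk hkj hkC
    exact absurd (Nat.cast_le.mp (h k ⟨k, rfl, hk, hkC⟩)) (not_le.mpr hkj)
  · rintro h _ ⟨k, rfl, hk, hkC⟩
    exact Nat.cast_le.mpr (not_lt.mp fun hkj => h k hk hkj hkC)

lemma one_le_and_mem_of_hitTime_eq {j : ℕ} (h : hitTime C ω = j) : 1 ≤ j ∧ ω j ∈ C := by
  have hne : {m : ℕ∞ | ∃ k : ℕ, m = k ∧ 1 ≤ k ∧ ω k ∈ C}.Nonempty := by
    by_contra hempty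
    rw [Set.not_nonempty_iff_eq_empty] at hempty
    simp [hitTime, hempty] at h
  obtain ⟨k, hk, hk1, hkC⟩ := csInf_mem hne
  obtain rfl : k = j := by exact_mod_cast hk.symm.trans h
  exact ⟨hk1, hkC⟩

lemma natCast_le_hitTime_iff_lt_or_eq {j : ℕ} :
    (j : ℕ∞) ≤ hitTime C ω ↔ ((j + 1 : ℕ) : ℕ∞) ≤ hitTime C ω ∨ hitTime C ω = j := by
  rw [Nat.cast_succ, ENat.add_one_le_iff (ENat.natCast_ne_top j), le_iff_lt_or_eq, eq_comm]

def cycleEvent (C : Set S) (j : ℕ) : Set (ℕ → S) := {ω | 1 ≤ j ∧ (j : ℕ∞) ≤ hitTime C ω}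

@[simp]
lemma cycleEvent_zero : cycleEvent C 0 = ∅ := by
  simp [cycleEvent]

@[simp]
lemma cycleEvent_one : cycleEvent C 1 = Set.univ :=
  Set.eq_univ_of_forall fun _ => ⟨le_rfl, natCast_le_hitTime_iff_s10.2 fun _ hk hk1 => by omega⟩

lemma cycleEvent_eq_union {j : ℕ} (hj : 1 ≤ j) :
    cycleEvent C j = cycleEvent C (j + 1) ∪ {ω | hitTime C ω = j} := by
  ext ω
  simp only [cycleEvent, Set.mem_union, Set.mem_ofPred_eq, hj, true_and, le_add_iff_nonneg_left,
    zero_le, natCast_le_hitTime_iff_lt_or_eq (j := j)]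

lemma disjoint_cycleEvent_succ_hitTime_eq (j : ℕ) :
    Disjoint (cycleEvent C (j + 1)) {ω | hitTime C ω = j} := by
  refine Set.disjoint_left.2 fun ω hsucc heq => ?_
  have hle : ((j + 1 : ℕ) : ℕ∞) ≤ j := (Set.mem_ofPred_eq ▸ heq) ▸ hsucc.2
  exact absurd (Nat.cast_le.mp hle) (by omega)

lemma hitTime_eq_top_subset_cycleEvent {j : ℕ} (hj : 1 ≤ j) :
    {ω | hitTime C ω = ⊤} ⊆ cycleEvent C j := fun _ hω =>
  ⟨hj, (Set.mem_ofPred_eq ▸ hω) ▸ le_top⟩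

end HitTime

abbrev pathUpTo (n : ℕ) : MeasurableSpace (ℕ → X) :=
  MeasurableSpace.comap (fun ω (i : Fin (n + 1)) => ω i) inferInstance

lemma pathUpTo_le (n : ℕ) : pathUpTo n ≤ (inferInstance : MeasurableSpace (ℕ → X)) :=
  Measurable.comap_le (by fun_prop)

lemma measurable_pathUpTo_apply {n k : ℕ} (hk : k ≤ n) :
    Measurable[pathUpTo n] fun ω : ℕ → X => ω k :=
  (measurable_pi_apply (⟨k, Nat.lt_succ_of_le hk⟩ : Fin (n + 1))).comp
    (comap_measurable fun (ω : ℕ → X) (i : Fin (n + 1)) => ω i)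

section Measurability

variable {C : Set X}

lemma measurableSet_pathUpTo_natCast_le_hitTime (hC : MeasurableSet C) {n j : ℕ}
    (hj : j ≤ n + 1) :
    MeasurableSet[pathUpTo n] {ω | (j : ℕ∞) ≤ hitTime C ω} := by
  have hset : {ω | (j : ℕ∞) ≤ hitTime C ω} = ⋂ k ∈ Finset.Ico 1 j, (fun ω => ω k) ⁻¹' Cᶜ := by
    ext ω
    simp only [Set.mem_ofPred_eq, natCast_le_hitTime_iff_s10, Set.mem_iInter, Finset.mem_Ico,
      Set.mem_preimage, Set.mem_compl_iff, and_imp]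
  rw [hset]
  exact Finset.measurableSet_biInter _ fun k hk =>
    measurable_pathUpTo_apply (by simp at hk; omega) hC.compl

lemma measurableSet_pathUpTo_hitTime_eq (hC : MeasurableSet C) (j : ℕ) :
    MeasurableSet[pathUpTo j] {ω | hitTime C ω = j} := by
  have hset : {ω | hitTime C ω = j}
      = {ω | (j : ℕ∞) ≤ hitTime C ω} \ {ω | ((j + 1 : ℕ) : ℕ∞) ≤ hitTime C ω} := by
    ext ω
    simp only [Set.mem_ofPred_eq, Set.mem_sdiff, natCast_le_hitTime_iff_lt_or_eq (j := j)]
    constructor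
    · intro h
      refine ⟨Or.inr h, ?_⟩
      rw [h]
      exact_mod_cast (by omega : ¬ j + 1 ≤ j)
    · rintro ⟨h | h, hnot⟩
      exacts [absurd h hnot, h]
  rw [hset]
  exact (measurableSet_pathUpTo_natCast_le_hitTime hC (by omega)).diff
    (measurableSet_pathUpTo_natCast_le_hitTime hC le_rfl)

lemma measurableSet_pathUpTo_cycleEvent (hC : MeasurableSet C) (j : ℕ) :
    MeasurableSet[pathUpTo j] (cycleEvent C j) := by
  rcases Nat.eq_zero_or_pos j with rfl | hj
  · simp
  · have hset : cycleEvent C j = {ω | (j : ℕ∞) ≤ hitTime C ω} := by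
      simp [cycleEvent, Nat.one_le_iff_ne_zero.2 hj.ne']
    rw [hset]
    exact measurableSet_pathUpTo_natCast_le_hitTime hC (by omega)

lemma measurableSet_cycleEvent (hC : MeasurableSet C) (j : ℕ) :
    MeasurableSet (cycleEvent C j) :=
  pathUpTo_le j _ (measurableSet_pathUpTo_cycleEvent hC j)

end Measurability

section ReturnTime

variable {C : Set X} {μ : Measure (ℕ → X)}

lemma measure_hitTime_eq_top_eq_zero (h : ∑' j, μ (cycleEvent C j) ≠ ⊤) :
    μ {ω | hitTime C ω = ⊤} = 0 := by
  by_contra hpos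
  refine h (top_le_iff.1 ?_)
  calc ⊤ = ∑' _ : ℕ, μ {ω | hitTime C ω = ⊤} := (ENNReal.tsum_const_eq_top_of_ne_zero hpos).symm
    _ ≤ ∑' j, μ (cycleEvent C (j + 1)) :=
      ENNReal.tsum_le_tsum fun j => measure_mono (hitTime_eq_top_subset_cycleEvent (by omega))
    _ ≤ ∑' j, μ (cycleEvent C j) :=
      ENNReal.tsum_comp_le_tsum_of_injective (add_left_injective 1) _

lemma tsum_measure_hitTime_eq_succ [IsProbabilityMeasure μ] (hC : MeasurableSet C)
    (h : ∑' j, μ (cycleEvent C j) ≠ ⊤) :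
    ∑' j, μ {ω | hitTime C ω = (j + 1 : ℕ)} = 1 := by
  have hdisj : Pairwise (Function.onFun Disjoint fun j : ℕ => {ω | hitTime C ω = (j + 1 : ℕ)}) :=
    fun i j hij => Set.disjoint_left.2 fun ω hi hj => hij <| by
      simp only [Set.mem_ofPred_eq] at hi hj
      exact Nat.succ_injective (Nat.cast_injective (hi.symm.trans hj))
  have hunion : (⋃ j : ℕ, {ω | hitTime C ω = (j + 1 : ℕ)}) = {ω | hitTime C ω = ⊤}ᶜ := by
    ext ω
    simp only [Set.mem_iUnion, Set.mem_ofPred_eq, Set.mem_compl_iff]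
    constructor
    · rintro ⟨j, hj⟩
      simp [hj]
    · intro hfin
      obtain ⟨m, hm⟩ := ENat.ne_top_iff_exists.1 hfin
      obtain ⟨hm1, -⟩ := one_le_and_mem_of_hitTime_eq hm.symm
      exact ⟨m - 1, by rw [← hm, Nat.sub_add_cancel hm1]⟩
  have hreturn : ({ω | hitTime C ω = ⊤}ᶜ : Set (ℕ → X)) =ᵐ[μ] (Set.univ : Set (ℕ → X)) := by
    rw [ae_eq_univ, compl_compl]
    exact measure_hitTime_eq_top_eq_zero h
  rw [← measure_iUnion hdisj fun j => pathUpTo_le _ _ (measurableSet_pathUpTo_hitTime_eq hC _),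
    hunion, measure_congr hreturn, measure_univ]

end ReturnTime

namespace IsMarkovFamily

variable {K : Kernel X X} {Pr : X → Measure (ℕ → X)}

lemma measure_succ_mem_inter (h : IsMarkovFamily K Pr) (x : X) {n : ℕ} {A : Set (ℕ → X)}
    (hA : MeasurableSet[pathUpTo n] A) {Γ : Set X} (hΓ : MeasurableSet Γ) :
    Pr x ({ω | ω (n + 1) ∈ Γ} ∩ A) = ∫⁻ ω in A, K (ω n) Γ ∂Pr x := by
  obtain ⟨B, hB, rfl⟩ := hA
  have hmarkov := h.2.2 x n B hB (Γ.indicator 1) (measurable_one.indicator hΓ)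
  simp only [lintegral_indicator_one hΓ] at hmarkov
  have hΓ' : MeasurableSet {ω : ℕ → X | ω (n + 1) ∈ Γ} := measurable_pi_apply (n + 1) hΓ
  refine Eq.trans ?_ hmarkov
  rw [← Measure.restrict_apply hΓ', ← lintegral_indicator_one hΓ']
  rfl

lemma measure_succ_mem_inter_of_kernel_eq (h : IsMarkovFamily K Pr) (x : X) {n : ℕ}
    {A : Set (ℕ → X)} (hA : MeasurableSet[pathUpTo n] A) {Γ : Set X} (hΓ : MeasurableSet Γ)
    {y : X} (hy : ∀ ω ∈ A, K (ω n) = K y) :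
    Pr x ({ω | ω (n + 1) ∈ Γ} ∩ A) = K y Γ * Pr x A := by
  rw [h.measure_succ_mem_inter x hA hΓ,
    setLIntegral_congr_fun (pathUpTo_le n A hA) fun ω hω => by rw [hy ω hω], setLIntegral_const]

variable {α : Set X} {x₀ : X} {Γ : Set X}

lemma measure_one_mem (h : IsMarkovFamily K Pr) (hα : MeasurableSet α)
    (hatom : ∀ x ∈ α, ∀ y ∈ α, K x = K y) (hx₀ : x₀ ∈ α) (hΓ : MeasurableSet Γ) :
    Pr x₀ {ω | ω 1 ∈ Γ} = K x₀ Γ := by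
  have := h.1 x₀
  have hS : MeasurableSet[pathUpTo 0] {ω : ℕ → X | ω 0 ∈ α} :=
    measurable_pathUpTo_apply le_rfl hα
  have hstart : Pr x₀ {ω | ω 0 ∈ α} = 1 := by
    refine le_antisymm prob_le_one ?_
    rw [← h.2.1 x₀]
    exact measure_mono fun ω (hω : ω 0 = x₀) => show ω 0 ∈ α from hω ▸ hx₀
  calc Pr x₀ {ω | ω 1 ∈ Γ} = Pr x₀ ({ω | ω 1 ∈ Γ} ∩ {ω | ω 0 ∈ α}) :=
        (measure_inter_conull ((prob_compl_eq_zero_iff (pathUpTo_le 0 _ hS)).2 hstart)).symm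
    _ = K x₀ Γ := by
        rw [h.measure_succ_mem_inter_of_kernel_eq x₀ hS hΓ fun ω hω => hatom _ hω _ hx₀,
          hstart, mul_one]

lemma measure_succ_mem_inter_cycleEvent (h : IsMarkovFamily K Pr) (hα : MeasurableSet α)
    (hatom : ∀ x ∈ α, ∀ y ∈ α, K x = K y) (hx₀ : x₀ ∈ α) (hΓ : MeasurableSet Γ) (j : ℕ) :
    Pr x₀ ({ω | ω (j + 2) ∈ Γ} ∩ cycleEvent α (j + 1))
      = Pr x₀ ({ω | ω (j + 2) ∈ Γ} ∩ cycleEvent α (j + 2))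
        + K x₀ Γ * Pr x₀ {ω | hitTime α ω = (j + 1 : ℕ)} := by
  have hΓ' : MeasurableSet {ω : ℕ → X | ω (j + 2) ∈ Γ} := measurable_pi_apply _ hΓ
  have hτ := measurableSet_pathUpTo_hitTime_eq hα (j + 1)
  rw [cycleEvent_eq_union (Nat.le_add_left 1 j), Set.inter_union_distrib_left,
    measure_union ((disjoint_cycleEvent_succ_hitTime_eq _).mono Set.inter_subset_right
      Set.inter_subset_right) (hΓ'.inter (pathUpTo_le _ _ hτ)),
    h.measure_succ_mem_inter_of_kernel_eq x₀ hτ hΓ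
      fun ω hω => hatom _ (one_le_and_mem_of_hitTime_eq hω).2 _ hx₀]

end IsMarkovFamily

section CycleOccupation

variable {Pr : X → Measure (ℕ → X)} {α : Set X} {x : X}

lemma atomReturnExp_eq_tsum (hα : MeasurableSet α) :
    atomReturnExp Pr α x = ∑' j, Pr x (cycleEvent α j) := by
  change ∫⁻ ω, ∑' j, (cycleEvent α j).indicator 1 ω ∂Pr x = _
  rw [lintegral_tsum fun j =>
    (measurable_one.indicator (measurableSet_cycleEvent hα j)).aemeasurable]
  exact tsum_congr fun j => lintegral_indicator_one (measurableSet_cycleEvent hα j)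

lemma lintegral_cycleOccupation {f : X → ENNReal} (hf : Measurable f) :
    ∫⁻ z, f z ∂cycleOccupation Pr α x = ∑' j, ∫⁻ ω in cycleEvent α j, f (ω j) ∂Pr x := by
  rw [cycleOccupation, lintegral_sum_measure]
  exact tsum_congr fun j => lintegral_map hf (measurable_pi_apply j)

lemma cycleOccupation_apply {Γ : Set X} (hΓ : MeasurableSet Γ) :
    cycleOccupation Pr α x Γ = ∑' j, Pr x ({ω | ω j ∈ Γ} ∩ cycleEvent α j) := by
  rw [cycleOccupation, Measure.sum_apply _ hΓ]
  exact tsum_congr fun j => by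
    rw [Measure.map_apply (measurable_pi_apply j) hΓ,
      Measure.restrict_apply (measurable_pi_apply j hΓ)]
    rfl

lemma cycleOccupation_univ (hα : MeasurableSet α) :
    cycleOccupation Pr α x Set.univ = atomReturnExp Pr α x := by
  simp [cycleOccupation_apply MeasurableSet.univ, atomReturnExp_eq_tsum hα]

end CycleOccupation

theorem IsMarkovFamily.lintegral_kernel_cycleOccupation {K : Kernel X X}
    {Pr : X → Measure (ℕ → X)} (h : IsMarkovFamily K Pr) {α : Set X} (hα : MeasurableSet α)
    (hatom : ∀ x ∈ α, ∀ y ∈ α, K x = K y) {x₀ : X} (hx₀ : x₀ ∈ α)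
    (hfin : atomReturnExp Pr α x₀ ≠ ⊤) {Γ : Set X} (hΓ : MeasurableSet Γ) :
    ∫⁻ z, K z Γ ∂cycleOccupation Pr α x₀ = cycleOccupation Pr α x₀ Γ := by
  have := h.1 x₀
  set a : ℕ → ENNReal := fun j => Pr x₀ ({ω | ω j ∈ Γ} ∩ cycleEvent α j) with ha
  set b : ℕ → ENNReal := fun j => Pr x₀ ({ω | ω (j + 1) ∈ Γ} ∩ cycleEvent α j) with hb
  have hkernel : ∫⁻ z, K z Γ ∂cycleOccupation Pr α x₀ = ∑' j, b j := by
    rw [lintegral_cycleOccupation (K.measurable_coe hΓ)]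
    exact tsum_congr fun j =>
      (h.measure_succ_mem_inter x₀ (measurableSet_pathUpTo_cycleEvent hα j) hΓ).symm
  have hfirst : a 1 = K x₀ Γ := by
    simpa [ha] using h.measure_one_mem hα hatom hx₀ hΓ
  have hstep (j : ℕ) :
      b (j + 1) = a (j + 2) + K x₀ Γ * Pr x₀ {ω | hitTime α ω = (j + 1 : ℕ)} :=
    h.measure_succ_mem_inter_cycleEvent hα hatom hx₀ hΓ j
  have hreturn := tsum_measure_hitTime_eq_succ hα (atomReturnExp_eq_tsum hα ▸ hfin)
  have ha0 : a 0 = 0 := by simp [ha]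
  have hb0 : b 0 = 0 := by simp [hb]
  calc ∫⁻ z, K z Γ ∂cycleOccupation Pr α x₀ = ∑' j, b (j + 1) := by
        rw [hkernel, tsum_eq_zero_add' ENNReal.summable, hb0, zero_add]
    _ = ∑' j, a (j + 2) + K x₀ Γ := by
        simp_rw [hstep, ENNReal.tsum_add, ENNReal.tsum_mul_left, hreturn, mul_one]
    _ = ∑' j, a j := by
        rw [tsum_eq_zero_add' (f := a) ENNReal.summable,
          tsum_eq_zero_add' (f := fun j => a (j + 1)) ENNReal.summable, ha0, zero_add, hfirst,
          add_comm]
    _ = cycleOccupation Pr α x₀ Γ := (cycleOccupation_apply hΓ).symm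

theorem atom_invariant_measure_general
    (K : Kernel X X) (Pr : X → Measure (ℕ → X))
    (hchain : IsMarkovFamily K Pr)
    (α : Set X) (hα : MeasurableSet α)
    (hatom : ∀ x ∈ α, ∀ y ∈ α, K x = K y)
    (x₀ : X) (hx₀ : x₀ ∈ α)
    (hfin : atomReturnExp Pr α x₀ < ⊤) :
    IsProbabilityMeasure ((atomReturnExp Pr α x₀)⁻¹ • cycleOccupation Pr α x₀) ∧
    ∀ Γ : Set X, MeasurableSet Γ →
      ((atomReturnExp Pr α x₀)⁻¹ • cycleOccupation Pr α x₀) Γ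
        = ∫⁻ z, K z Γ ∂ ((atomReturnExp Pr α x₀)⁻¹ • cycleOccupation Pr α x₀) := by
  have := hchain.1 x₀
  have hpos : atomReturnExp Pr α x₀ ≠ 0 := by
    rw [atomReturnExp_eq_tsum hα]
    exact ne_bot_of_le_ne_bot (by simp) (ENNReal.le_tsum 1)
  refine ⟨⟨?_⟩, fun Γ hΓ => ?_⟩
  · rw [Measure.smul_apply, smul_eq_mul, cycleOccupation_univ hα,
      ENNReal.inv_mul_cancel hpos hfin.ne]
  · rw [lintegral_smul_measure,
      hchain.lintegral_kernel_cycleOccupation hα hatom hx₀ hfin.ne hΓ, Measure.smul_apply]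

/-- Kac formula: for a `ψ`-irreducible chain with an accessible
atom `α` with integrable return time, the normalized cycle occupation measure
is an invariant probability measure. -/
theorem atom_invariant_measure
    (K : Kernel X X) [IsMarkovKernel K] (Pr : X → Measure (ℕ → X))
    (hchain : IsMarkovFamily K Pr)
    (ψ : Measure X) (hψ : ψ ≠ 0)
    (hirr : ∀ A : Set X, MeasurableSet A → 0 < ψ A →
      ∀ x, 0 < Pr x {ω | ∃ n : ℕ, 1 ≤ n ∧ ω n ∈ A})
    (α : Set X) (hα : MeasurableSet α) (hacc : 0 < ψ α)
    (hatom : ∀ x ∈ α, ∀ y ∈ α, K x = K y)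
    (x₀ : X) (hx₀ : x₀ ∈ α)
    (hfin : atomReturnExp Pr α x₀ < ⊤) :
    IsProbabilityMeasure ((atomReturnExp Pr α x₀)⁻¹ • cycleOccupation Pr α x₀) ∧
    ∀ Γ : Set X, MeasurableSet Γ →
      ((atomReturnExp Pr α x₀)⁻¹ • cycleOccupation Pr α x₀) Γ
        = ∫⁻ z, K z Γ ∂ ((atomReturnExp Pr α x₀)⁻¹ • cycleOccupation Pr α x₀) :=
  atom_invariant_measure_general K Pr hchain α hα hatom x₀ hx₀ hfin
end

section
/- Let (Φ_n) be a Markov chain on (X,B(X)) satisfying the minorization condition P(x,A) ≥ 2δ·1_C(x)·ν(A) for all x and A, with 0 < δ < 1/2, ν(C) = 1. Define the split chain on X̌ = X × {0,1} with transition kernel P̌(x̌,·) = Q(x̌,·)*, where Q(x̌,·) = P(x,·) if x̌ ∈ X_0∖C_0, Q(x̌,·) = (P(x,·) − δν(·))/(1−δ) if x̌ ∈ C_0, and Q(x̌,·) = ν(·) if x̌ ∈ X_1, and λ*(A_0) = (1−δ)λ(A∩C) + λ(A∩C^c), λ*(A_1) = δλ(A∩C). Then for any measure λ on B(X) and any Γ̌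 ∈ B(X̌), ∫_{X̌} P̌(x̌, Γ̌) λ*(dx̌) = λ_1*(Γ̌), where λ_1(·) = ∫_X P(x,·) λ(dx). -/
open MeasureTheory ProbabilityTheory

variable {X : Type*} [MeasurableSpace X]

/-- The splitting `λ*` of a measure `λ` on `X`:
`λ*(A₀) = (1−δ)λ(A∩C) + λ(A∩Cᶜ)`, `λ*(A₁) = δλ(A∩C)`. -/
noncomputable def splitMeasure (C : Set X) (δ : ℝ) (μ0 : Measure X) :
    Measure (X × Bool) :=
  Measure.map (fun x => (x, false))
      (ENNReal.ofReal (1 - δ) • μ0.restrict C + μ0.restrict Cᶜ)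
    + Measure.map (fun x => (x, true)) (ENNReal.ofReal δ • μ0.restrict C)

open Classical in
/-- The kernel `Q` of the split-chain construction. -/
noncomputable def splitQ (P : Kernel X X) (ν : Measure X) (C : Set X) (δ : ℝ)
    (xs : X × Bool) : Measure X :=
  if xs.2 = true then ν
  else if xs.1 ∈ C then
    (ENNReal.ofReal (1 - δ))⁻¹ • ((P xs.1) - ENNReal.ofReal δ • ν)
  else P xs.1

/-- The split (Nummelin) transition kernel `P̌(xs,·) = Q(xs,·)*`. -/
noncomputable def splitKernel (P : Kernel X X) (ν : Measure X) (C : Set X)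
    (δ : ℝ) (xs : X × Bool) : Measure (X × Bool) :=
  splitMeasure C δ (splitQ P ν C δ xs)

/-!
Splitting is linear in the measure, so it commutes with mixtures: `(∫ κ a μ(da))* = ∫ (κ a)* μ(da)`.
Since `P̌(x̌, ·) = Q(x̌, ·)*`, this gives `λ* P̌ = (λ* Q)*`, and it remains to see `λ* Q = λ P`.
That is a fibrewise statement: over `x ∈ C` the measure `λ*` puts weights `1 - δ` and `δ` on
`(x, 0)` and `(x, 1)`, and
`(1 - δ) Q((x, 0), ·) + δ Q((x, 1), ·) = (P(x, ·) - δ ν) + δ ν = P(x, ·)`;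
off `C` it puts all the mass on `(x, 0)`, where `Q = P`.
-/

section SplitMeasure

variable (C : Set X) (δ : ℝ)

lemma splitMeasure_apply (μ : Measure X) {G : Set (X × Bool)} (hG : MeasurableSet G) :
    splitMeasure C δ μ G
      = ENNReal.ofReal (1 - δ) * μ ((·, false) ⁻¹' G ∩ C) + μ ((·, false) ⁻¹' G ∩ Cᶜ)
        + ENNReal.ofReal δ * μ ((·, true) ⁻¹' G ∩ C) := by
  have h0 : Measurable fun x : X => (x, false) := measurable_id.prodMk measurable_const
  have h1 : Measurable fun x : X => (x, true) := measurable_id.prodMk measurable_const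
  rw [splitMeasure, Measure.add_apply, Measure.map_apply h0 hG, Measure.map_apply h1 hG,
    Measure.add_apply, Measure.smul_apply, Measure.smul_apply,
    Measure.restrict_apply (h0 hG), Measure.restrict_apply (h0 hG),
    Measure.restrict_apply (h1 hG), smul_eq_mul, smul_eq_mul]

lemma lintegral_splitMeasure (μ : Measure X) {f : X × Bool → ENNReal} (hf : Measurable f) :
    ∫⁻ xs, f xs ∂splitMeasure C δ μ
      = ENNReal.ofReal (1 - δ) * ∫⁻ x in C, f (x, false) ∂μ + ∫⁻ x in Cᶜ, f (x, false) ∂μ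
        + ENNReal.ofReal δ * ∫⁻ x in C, f (x, true) ∂μ := by
  have h0 : Measurable fun x : X => (x, false) := measurable_id.prodMk measurable_const
  have h1 : Measurable fun x : X => (x, true) := measurable_id.prodMk measurable_const
  rw [splitMeasure, lintegral_add_measure, lintegral_map hf h0, lintegral_map hf h1,
    lintegral_add_measure, lintegral_smul_measure, lintegral_smul_measure, smul_eq_mul,
    smul_eq_mul]

variable {C}

lemma measurable_splitMeasure (hC : MeasurableSet C) : Measurable (splitMeasure C δ) := by
  refine Measure.measurable_of_measurable_coe _ fun G hG => ?_
  have hG₀ : MeasurableSet ((·, false) ⁻¹' G : Set X) := measurable_prodMk_right hG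
  have hG₁ : MeasurableSet ((·, true) ⁻¹' G : Set X) := measurable_prodMk_right hG
  simp_rw [splitMeasure_apply C δ _ hG]
  exact (((Measure.measurable_coe (hG₀.inter hC)).const_mul _).add
    (Measure.measurable_coe (hG₀.inter hC.compl))).add
    ((Measure.measurable_coe (hG₁.inter hC)).const_mul _)

lemma splitMeasure_bind (hC : MeasurableSet C) {α : Type*} [MeasurableSpace α] (μ : Measure α)
    {κ : α → Measure X} (hκ : Measurable κ) :
    splitMeasure C δ (μ.bind κ) = μ.bind fun a => splitMeasure C δ (κ a) := by
  ext G hG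
  have hG₀ : MeasurableSet ((·, false) ⁻¹' G : Set X) := measurable_prodMk_right hG
  have hG₁ : MeasurableSet ((·, true) ⁻¹' G : Set X) := measurable_prodMk_right hG
  have hκ₁ : Measurable fun a => κ a ((·, false) ⁻¹' G ∩ C) :=
    Measure.measurable_coe (hG₀.inter hC) |>.comp hκ
  have hκ₂ : Measurable fun a => κ a ((·, false) ⁻¹' G ∩ Cᶜ) :=
    Measure.measurable_coe (hG₀.inter hC.compl) |>.comp hκ
  rw [splitMeasure_apply C δ _ hG,
    Measure.bind_apply (f := fun a => splitMeasure C δ (κ a)) hG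
      ((measurable_splitMeasure δ hC).comp hκ).aemeasurable,
    Measure.bind_apply (hG₀.inter hC) hκ.aemeasurable,
    Measure.bind_apply (hG₀.inter hC.compl) hκ.aemeasurable,
    Measure.bind_apply (hG₁.inter hC) hκ.aemeasurable]
  simp_rw [splitMeasure_apply C δ _ hG]
  have hκ₀ : Measurable fun a =>
      ENNReal.ofReal (1 - δ) * κ a ((·, false) ⁻¹' G ∩ C) + κ a ((·, false) ⁻¹' G ∩ Cᶜ) :=
    (hκ₁.const_mul _).add hκ₂
  rw [lintegral_add_left hκ₀, lintegral_add_left (hκ₁.const_mul _),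
    lintegral_const_mul' _ _ ENNReal.ofReal_ne_top, lintegral_const_mul' _ _ ENNReal.ofReal_ne_top]

end SplitMeasure

section SplitQ

variable {P : Kernel X X} {ν : Measure X} {C : Set X} {δ : ℝ}

lemma smul_le_of_minorization (hδ0 : 0 < δ)
    (hminor : ∀ x, ∀ A : Set X, MeasurableSet A →
      ENNReal.ofReal (2 * δ) * C.indicator 1 x * ν A ≤ P x A)
    {x : X} (hx : x ∈ C) : ENNReal.ofReal δ • ν ≤ P x := by
  refine Measure.le_iff.mpr fun A hA => le_trans ?_ (hminor x A hA)
  rw [Set.indicator_of_mem hx, Pi.one_apply, mul_one, Measure.smul_apply, smul_eq_mul]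
  gcongr
  linarith

@[simp]
lemma splitQ_true (x : X) : splitQ P ν C δ (x, true) = ν := by
  simp [splitQ]

lemma splitQ_false_of_mem {x : X} (hx : x ∈ C) :
    splitQ P ν C δ (x, false) = (ENNReal.ofReal (1 - δ))⁻¹ • (P x - ENNReal.ofReal δ • ν) := by
  simp [splitQ, hx]

lemma splitQ_false_of_notMem {x : X} (hx : x ∉ C) : splitQ P ν C δ (x, false) = P x := by
  simp [splitQ, hx]

lemma splitQ_false_apply_of_mem [IsFiniteMeasure ν] {x : X} (hx : x ∈ C)
    (hle : ENNReal.ofReal δ • ν ≤ P x) {S : Set X} (hS : MeasurableSet S) :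
    splitQ P ν C δ (x, false) S
      = (ENNReal.ofReal (1 - δ))⁻¹ * (P x S - ENNReal.ofReal δ * ν S) := by
  have := ν.smul_finite (ENNReal.ofReal_ne_top (r := δ))
  rw [splitQ_false_of_mem hx, Measure.smul_apply, Measure.sub_apply hS hle, Measure.smul_apply,
    smul_eq_mul, smul_eq_mul]

lemma smul_splitQ_false_add_smul_splitQ_true [IsFiniteMeasure ν] (hδ : δ < 1) {x : X}
    (hx : x ∈ C) (hle : ENNReal.ofReal δ • ν ≤ P x) :
    ENNReal.ofReal (1 - δ) • splitQ P ν C δ (x, false) + ENNReal.ofReal δ • splitQ P ν C δ (x, true)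
      = P x := by
  have ha : ENNReal.ofReal (1 - δ) ≠ 0 := (ENNReal.ofReal_pos.mpr (by linarith)).ne'
  have := ν.smul_finite (ENNReal.ofReal_ne_top (r := δ))
  rw [splitQ_false_of_mem hx, splitQ_true, smul_smul,
    ENNReal.mul_inv_cancel ha ENNReal.ofReal_ne_top, one_smul, Measure.sub_add_cancel_of_le hle]

lemma measurable_splitQ [IsFiniteMeasure ν] (hC : MeasurableSet C)
    (hle : ∀ x ∈ C, ENNReal.ofReal δ • ν ≤ P x) : Measurable (splitQ P ν C δ) := by
  classical
  refine measurable_from_prod_countable_left fun b => ?_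
  cases b
  case true => simp
  case false =>
    refine Measure.measurable_of_measurable_coe _ fun S hS => ?_
    have hpiece : (fun x => splitQ P ν C δ (x, false) S) = C.piecewise
        (fun x => (ENNReal.ofReal (1 - δ))⁻¹ * (P x S - ENNReal.ofReal δ * ν S))
        (fun x => P x S) := by
      ext x
      by_cases hx : x ∈ C
      · rw [Set.piecewise_eq_of_mem _ _ _ hx, splitQ_false_apply_of_mem hx (hle x hx) hS]
      · rw [Set.piecewise_eq_of_notMem _ _ _ hx, splitQ_false_of_notMem hx]
    rw [hpiece]
    exact Measurable.piecewise hC (((P.measurable_coe hS).sub_const _).const_mul _)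
      (P.measurable_coe hS)

lemma splitMeasure_bind_splitQ [IsFiniteMeasure ν] (hC : MeasurableSet C) (hδ : δ < 1)
    (hle : ∀ x ∈ C, ENNReal.ofReal δ • ν ≤ P x) (μ : Measure X) :
    (splitMeasure C δ μ).bind (splitQ P ν C δ) = μ.bind P := by
  ext S hS
  have hQ := measurable_splitQ hC hle
  have hfibre : ∀ x ∈ C, ENNReal.ofReal (1 - δ) * splitQ P ν C δ (x, false) S
      + ENNReal.ofReal δ * splitQ P ν C δ (x, true) S = P x S := fun x hx => by
    rw [← smul_splitQ_false_add_smul_splitQ_true hδ hx (hle x hx)]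
    rfl
  have hQS : Measurable fun xs => splitQ P ν C δ xs S := Measure.measurable_coe hS |>.comp hQ
  have hQS₀ : Measurable fun x => ENNReal.ofReal (1 - δ) * splitQ P ν C δ (x, false) S :=
    (hQS.comp measurable_prodMk_right).const_mul _
  rw [Measure.bind_apply hS hQ.aemeasurable, Measure.bind_apply hS P.measurable.aemeasurable,
    lintegral_splitMeasure C δ μ hQS, ← lintegral_add_compl (fun x => P x S) hC]
  calc ENNReal.ofReal (1 - δ) * ∫⁻ x in C, splitQ P ν C δ (x, false) S ∂μ
        + ∫⁻ x in Cᶜ, splitQ P ν C δ (x, false) S ∂μ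
        + ENNReal.ofReal δ * ∫⁻ x in C, splitQ P ν C δ (x, true) S ∂μ
      = ∫⁻ x in C, (ENNReal.ofReal (1 - δ) * splitQ P ν C δ (x, false) S
          + ENNReal.ofReal δ * splitQ P ν C δ (x, true) S) ∂μ
        + ∫⁻ x in Cᶜ, splitQ P ν C δ (x, false) S ∂μ := by
        rw [lintegral_add_left hQS₀, lintegral_const_mul' _ _ ENNReal.ofReal_ne_top,
          lintegral_const_mul' _ _ ENNReal.ofReal_ne_top]
        ring
    _ = ∫⁻ x in C, P x S ∂μ + ∫⁻ x in Cᶜ, P x S ∂μ := by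
        rw [setLIntegral_congr_fun hC hfibre,
          setLIntegral_congr_fun hC.compl fun x hx => by rw [splitQ_false_of_notMem hx]]

end SplitQ

theorem splitKernel_intertwines_general
    (P : Kernel X X)
    (C : Set X) (hC : MeasurableSet C)
    (ν : Measure X) [IsProbabilityMeasure ν]
    (δ : ℝ) (hδ0 : 0 < δ) (hδ : δ < 1 / 2)
    (hminor : ∀ x, ∀ A : Set X, MeasurableSet A →
      ENNReal.ofReal (2 * δ) * C.indicator 1 x * ν A ≤ P x A)
    (μ0 : Measure X) (G : Set (X × Bool)) (hG : MeasurableSet G) :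
    ∫⁻ xs, splitKernel P ν C δ xs G ∂ splitMeasure C δ μ0
      = splitMeasure C δ (μ0.bind fun x => P x) G := by
  have hle : ∀ x ∈ C, ENNReal.ofReal δ • ν ≤ P x := fun x hx =>
    smul_le_of_minorization hδ0 hminor hx
  have hQ : Measurable (splitQ P ν C δ) := measurable_splitQ hC hle
  have hsplitQ : Measurable fun xs => splitMeasure C δ (splitQ P ν C δ xs) :=
    (measurable_splitMeasure δ hC).comp hQ
  simp only [splitKernel]
  rw [← Measure.bind_apply hG hsplitQ.aemeasurable, ← splitMeasure_bind δ hC _ hQ,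
    splitMeasure_bind_splitQ hC (by linarith) hle]

/-- the splitting operation intertwines the original kernel and
the split kernel: `∫ P̌(xs,G) λ*(dxs) = (λ₁)*(G)` where `λ₁ = ∫ P(x,·)λ(dx)`. -/
theorem splitKernel_intertwines
    (P : Kernel X X) [IsMarkovKernel P]
    (C : Set X) (hC : MeasurableSet C)
    (ν : Measure X) [IsProbabilityMeasure ν] (hνC : ν C = 1)
    (δ : ℝ) (hδ0 : 0 < δ) (hδ : δ < 1 / 2)
    (hminor : ∀ x, ∀ A : Set X, MeasurableSet A →
      ENNReal.ofReal (2 * δ) * C.indicator 1 x * ν A ≤ P x A)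
    (μ0 : Measure X) (G : Set (X × Bool)) (hG : MeasurableSet G) :
    ∫⁻ xs, splitKernel P ν C δ xs G ∂ splitMeasure C δ μ0
      = splitMeasure C δ (μ0.bind fun x => P x) G :=
  splitKernel_intertwines_general P C hC ν δ hδ0 hδ hminor μ0 G hG
end

section
/- In the setting of the Nummelin split chain: for any n ≥ 1, any measurable nonnegative function G_n : X^n → ℝ, and any measure λ on B(X), ∫_X E_x[G_n(Φ_1,…,Φ_n)] λ(dx) = ∫_{X̌} Ě_{x̌}[G_n(φ̌_1,…,φ̌_n)] λ*(dx̌), where φ̌_j denotes the first (X-valued) component of the split chain Φ̌_j. -/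
open MeasureTheory ProbabilityTheory

variable {X : Type*} [MeasurableSpace X]

/-- Markov family of path measures for a transition function `K`. -/
def IsMarkovFamilyFun {Y : Type*} [MeasurableSpace Y] (K : Y → Measure Y)
    (Pr : Y → Measure (ℕ → Y)) : Prop :=
  (∀ y, IsProbabilityMeasure (Pr y)) ∧
  (∀ y, Pr y {ω | ω 0 = y} = 1) ∧
  (∀ y (n : ℕ) (B : Set (Fin (n + 1) → Y)), MeasurableSet B →
    ∀ f : Y → ENNReal, Measurable f →
      ∫⁻ ω in {ω | (fun i : Fin (n + 1) => ω i.1) ∈ B}, f (ω (n + 1)) ∂ Pr y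
        = ∫⁻ ω in {ω | (fun i : Fin (n + 1) => ω i.1) ∈ B},
            ∫⁻ z, f z ∂ (K (ω n)) ∂ Pr y)

/-!
Integrating against `λ*` amounts to integrating against `λ` the average of the integrand over
the two copies `(y, 0)`, `(y, 1)` of each point, with weights `1 - δ`, `δ` on `C`. The kernel `Q`
is built so that this average of `Q(·, dz)` over the two copies of `y` is `P(y, dz)`; this is
where the minorization `δ ν ≤ P(y, ·)` on `C` enters. By induction on `n`, the first components of
the split path up to time `n`, together with the bell variable at time `n`, are then distributed
like the original path with the bell drawn by splitting its state at time `n`. Forgetting the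
bell gives the theorem.
-/

open scoped ENNReal

@[fun_prop]
lemma Measurable.finSnoc {α Y : Type*} [MeasurableSpace α] [MeasurableSpace Y] {m : ℕ}
    {f : α → Fin m → Y} {g : α → Y} (hf : Measurable f) (hg : Measurable g) :
    Measurable fun a => (Fin.snoc (f a) (g a) : Fin (m + 1) → Y) := by
  refine measurable_pi_lambda _ fun i => Fin.lastCases ?_ (fun j => ?_) i
  · simpa using hg
  · simpa using hf.eval

lemma prefix_succ_eq_snoc {Y : Type*} (ω : ℕ → Y) (n : ℕ) :
    (fun i : Fin (n + 2) => ω i) = Fin.snoc (fun i : Fin (n + 1) => ω i) (ω (n + 1)) := by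
  funext i
  refine Fin.lastCases ?_ (fun j => ?_) i <;> simp

namespace IsMarkovFamilyFun

variable {Y : Type*} [MeasurableSpace Y] {K : Y → Measure Y} {Pr : Y → Measure (ℕ → Y)}

lemma lintegral_comp_eval_zero (h : IsMarkovFamilyFun K Pr) (y : Y) {f : Y → ℝ≥0∞}
    (hf : Measurable f) : ∫⁻ ω, f (ω 0) ∂Pr y = f y := by
  have := h.1 y
  have hS : MeasurableSet {ω : ℕ → Y | f (ω 0) = f y} :=
    measurableSet_eq_fun (hf.comp (measurable_pi_apply 0)) measurable_const
  have hae : ∀ᵐ ω ∂Pr y, f (ω 0) = f y := by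
    refine (ae_iff_measure_eq hS.nullMeasurableSet).2 (le_antisymm (measure_mono le_top) ?_)
    rw [measure_univ, ← h.2.1 y]
    exact measure_mono fun ω (hω : ω 0 = y) => by simp [hω]
  rw [lintegral_congr_ae hae, lintegral_const, measure_univ, mul_one]

lemma map_prefix_next_eq_compProd (h : IsMarkovFamilyFun K Pr) (hK : Measurable K)
    [hK1 : ∀ y, IsProbabilityMeasure (K y)] (y : Y) (n : ℕ) :
    (Pr y).map (fun ω => ((fun i : Fin (n + 1) => ω i), ω (n + 1)))
      = (Pr y).map (fun ω (i : Fin (n + 1)) => ω i)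
          ⊗ₘ Kernel.comap ⟨K, hK⟩ (fun w => w (Fin.last n)) (measurable_pi_apply _) := by
  have := h.1 y
  have : IsMarkovKernel (⟨K, hK⟩ : Kernel Y Y) := ⟨hK1⟩
  have hpre : Measurable fun (ω : ℕ → Y) (i : Fin (n + 1)) => ω i := by fun_prop
  refine Measure.ext_prod fun {B A} hB hA => ?_
  have hnext : MeasurableSet {ω : ℕ → Y | ω (n + 1) ∈ A} := measurable_pi_apply (n + 1) hA
  rw [Measure.map_apply (by fun_prop) (hB.prod hA), Measure.compProd_apply_prod hB hA,
    setLIntegral_map hB (Kernel.measurable_coe _ hA) hpre]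
  calc Pr y ({ω | (fun i : Fin (n + 1) => ω i) ∈ B} ∩ {ω | ω (n + 1) ∈ A})
      = ∫⁻ ω in {ω | (fun i : Fin (n + 1) => ω i) ∈ B}, A.indicator 1 (ω (n + 1)) ∂Pr y := by
        rw [← setLIntegral_one, Set.inter_comm, ← setLIntegral_indicator hnext]
        rfl
      _ = _ := h.2.2 y n B hB _ (measurable_one.indicator hA)
      _ = _ := by simp_rw [lintegral_indicator_one hA]; rfl

lemma lintegral_prefix_succ (h : IsMarkovFamilyFun K Pr) (hK : Measurable K)
    [∀ y, IsProbabilityMeasure (K y)] (y : Y) (n : ℕ) {Φ : (Fin (n + 2) → Y) → ℝ≥0∞}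
    (hΦ : Measurable Φ) :
    ∫⁻ ω, Φ (fun i => ω i) ∂Pr y
      = ∫⁻ ω, ∫⁻ z, Φ (Fin.snoc (fun i : Fin (n + 1) => ω i) z) ∂K (ω n) ∂Pr y := by
  have := h.1 y
  have : IsMarkovKernel (⟨K, hK⟩ : Kernel Y Y) := ⟨‹_›⟩
  have hΦ' : Measurable fun q : (Fin (n + 1) → Y) × Y => Φ (Fin.snoc q.1 q.2) := by fun_prop
  have hpair : Measurable fun ω : ℕ → Y => ((fun i : Fin (n + 1) => ω i), ω (n + 1)) := by
    fun_prop
  simp_rw [prefix_succ_eq_snoc]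
  calc ∫⁻ ω, Φ (Fin.snoc (fun i : Fin (n + 1) => ω i) (ω (n + 1))) ∂Pr y
      = ∫⁻ q, Φ (Fin.snoc q.1 q.2)
          ∂(Pr y).map (fun ω => ((fun i : Fin (n + 1) => ω i), ω (n + 1))) :=
        (lintegral_map hΦ' hpair).symm
    _ = ∫⁻ w, ∫⁻ z, Φ (Fin.snoc w z) ∂K (w (Fin.last n))
          ∂(Pr y).map (fun ω (i : Fin (n + 1)) => ω i) := by
        rw [h.map_prefix_next_eq_compProd hK, Measure.lintegral_compProd hΦ']
        rfl
    _ = _ := lintegral_map (hΦ'.lintegral_kernel_prod_right'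
          (κ := Kernel.comap ⟨K, hK⟩ _ (measurable_pi_apply (Fin.last n)))) (by fun_prop)

end IsMarkovFamilyFun

namespace SplitChain

section SplitAverage

variable {C : Set X} {δ : ℝ}

open Classical in
/-- The integral of `F` against the splitting of the Dirac mass at `y`. -/
noncomputable def splitAverage (C : Set X) (δ : ℝ) (F : X × Bool → ℝ≥0∞) (y : X) : ℝ≥0∞ :=
  if y ∈ C then ENNReal.ofReal (1 - δ) * F (y, false) + ENNReal.ofReal δ * F (y, true)
  else F (y, false)

lemma measurable_uncurry_splitAverage {α : Type*} [MeasurableSpace α] (hC : MeasurableSet C)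
    {F : α → X × Bool → ℝ≥0∞} (hF : Measurable (Function.uncurry F)) :
    Measurable (Function.uncurry fun a => splitAverage C δ (F a)) := by
  have h₀ : Measurable fun p : α × X => F p.1 (p.2, false) := by fun_prop
  have h₁ : Measurable fun p : α × X => F p.1 (p.2, true) := by fun_prop
  exact Measurable.ite (measurable_snd hC) ((h₀.const_mul _).add (h₁.const_mul _)) h₀

lemma measurable_splitAverage (hC : MeasurableSet C) {F : X × Bool → ℝ≥0∞}
    (hF : Measurable F) : Measurable (splitAverage C δ F) := by
  have h₀ : Measurable fun y => F (y, false) := by fun_prop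
  have h₁ : Measurable fun y => F (y, true) := by fun_prop
  exact Measurable.ite hC ((h₀.const_mul _).add (h₁.const_mul _)) h₀

omit [MeasurableSpace X] in
lemma splitAverage_const (hδ0 : 0 ≤ δ) (hδ1 : δ ≤ 1) (a : ℝ≥0∞) (y : X) :
    splitAverage C δ (fun _ => a) y = a := by
  unfold splitAverage
  split_ifs
  · rw [← add_mul, ← ENNReal.ofReal_add (by linarith) hδ0, sub_add_cancel, ENNReal.ofReal_one,
      one_mul]
  · rfl

lemma lintegral_splitMeasure (hC : MeasurableSet C) (μ : Measure X) {F : X × Bool → ℝ≥0∞}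
    (hF : Measurable F) :
    ∫⁻ p, F p ∂splitMeasure C δ μ = ∫⁻ y, splitAverage C δ F y ∂μ := by
  have h₀ : Measurable fun x : X => F (x, false) := by fun_prop
  have h₁ : Measurable fun x : X => F (x, true) := by fun_prop
  have hsplit : ∫⁻ y, splitAverage C δ F y ∂μ
      = ∫⁻ y in C, ENNReal.ofReal (1 - δ) * F (y, false) + ENNReal.ofReal δ * F (y, true) ∂μ
        + ∫⁻ y in Cᶜ, F (y, false) ∂μ := by
    rw [← lintegral_add_compl _ hC]
    congr 1
    · exact setLIntegral_congr_fun hC fun y hy => by simp [splitAverage, hy]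
    · exact setLIntegral_congr_fun hC.compl fun y hy => by
        simp [splitAverage, Set.notMem_of_mem_compl hy]
  rw [hsplit, splitMeasure, lintegral_add_measure, lintegral_map hF (by fun_prop),
    lintegral_map hF (by fun_prop), lintegral_add_measure, lintegral_smul_measure,
    lintegral_smul_measure, lintegral_add_left (h₀.const_mul _), lintegral_const_mul _ h₀,
    lintegral_const_mul _ h₁]
  ring

lemma splitMeasure_univ (hC : MeasurableSet C) (hδ0 : 0 ≤ δ) (hδ1 : δ ≤ 1) (μ : Measure X) :
    splitMeasure C δ μ Set.univ = μ Set.univ := by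
  simp_rw [← lintegral_one, lintegral_splitMeasure hC μ measurable_const,
    splitAverage_const hδ0 hδ1]

end SplitAverage

section SplitQ

variable {P : Kernel X X} {ν : Measure X} {C : Set X} {δ : ℝ}

omit [MeasurableSpace X] in
lemma ofReal_one_sub_ne_zero (hδ1 : δ < 1) : ENNReal.ofReal (1 - δ) ≠ 0 :=
  ENNReal.ofReal_ne_zero_iff.2 (sub_pos.2 hδ1)

@[simp]
lemma splitQ_true (x : X) : splitQ P ν C δ (x, true) = ν := by simp [splitQ]

lemma splitQ_false_of_mem {x : X} (hx : x ∈ C) :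
    splitQ P ν C δ (x, false) = (ENNReal.ofReal (1 - δ))⁻¹ • (P x - ENNReal.ofReal δ • ν) := by
  simp [splitQ, hx]

lemma splitQ_false_of_notMem {x : X} (hx : x ∉ C) : splitQ P ν C δ (x, false) = P x := by
  simp [splitQ, hx]

/-- On `C`, `(1 - δ) Q((y, 0), ·) + δ Q((y, 1), ·) = (P(y, ·) - δ ν) + δ ν = P(y, ·)`, the last
step by the minorization. -/
lemma splitAverage_lintegral_splitQ [IsFiniteMeasure ν] (hδ1 : δ < 1)
    (hminor : ∀ x ∈ C, ENNReal.ofReal δ • ν ≤ P x) (g : X → ℝ≥0∞) (y : X) :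
    splitAverage C δ (fun p => ∫⁻ z, g z ∂splitQ P ν C δ p) y = ∫⁻ z, g z ∂P y := by
  have := ν.smul_finite (ENNReal.ofReal_ne_top (r := δ))
  by_cases hy : y ∈ C
  · rw [splitAverage, if_pos hy, splitQ_false_of_mem hy, splitQ_true, lintegral_smul_measure,
      smul_eq_mul, ← mul_assoc, ENNReal.mul_inv_cancel (ofReal_one_sub_ne_zero hδ1)
      ENNReal.ofReal_ne_top, one_mul, ← smul_eq_mul, ← lintegral_smul_measure,
      ← lintegral_add_measure, Measure.sub_add_cancel_of_le (hminor y hy)]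
  · rw [splitAverage, if_neg hy, splitQ_false_of_notMem hy]

lemma isProbabilityMeasure_splitQ [IsMarkovKernel P] [IsProbabilityMeasure ν]
    (hδ0 : 0 ≤ δ) (hδ1 : δ < 1) (hminor : ∀ x ∈ C, ENNReal.ofReal δ • ν ≤ P x)
    (p : X × Bool) : IsProbabilityMeasure (splitQ P ν C δ p) := by
  have := ν.smul_finite (ENNReal.ofReal_ne_top (r := δ))
  obtain ⟨x, _ | _⟩ := p
  · by_cases hx : x ∈ C
    · constructor
      rw [splitQ_false_of_mem hx, Measure.smul_apply,
        Measure.sub_apply MeasurableSet.univ (hminor x hx), Measure.smul_apply, measure_univ,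
        measure_univ, smul_eq_mul, smul_eq_mul, mul_one, ← ENNReal.ofReal_one,
        ← ENNReal.ofReal_sub _ hδ0, ENNReal.ofReal_one]
      exact ENNReal.inv_mul_cancel (ofReal_one_sub_ne_zero hδ1) ENNReal.ofReal_ne_top
    · rw [splitQ_false_of_notMem hx]
      infer_instance
  · rw [splitQ_true]
    infer_instance

lemma isProbabilityMeasure_splitKernel [IsMarkovKernel P] [IsProbabilityMeasure ν]
    (hC : MeasurableSet C) (hδ0 : 0 ≤ δ) (hδ1 : δ < 1)
    (hminor : ∀ x ∈ C, ENNReal.ofReal δ • ν ≤ P x) (p : X × Bool) :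
    IsProbabilityMeasure (splitKernel P ν C δ p) := by
  have := isProbabilityMeasure_splitQ hδ0 hδ1 hminor p
  exact ⟨by rw [splitKernel, splitMeasure_univ hC hδ0 hδ1.le, measure_univ]⟩

lemma measurable_splitQ [IsFiniteMeasure ν] (hC : MeasurableSet C)
    (hminor : ∀ x ∈ C, ENNReal.ofReal δ • ν ≤ P x) : Measurable (splitQ P ν C δ) := by
  classical
  have := ν.smul_finite (ENNReal.ofReal_ne_top (r := δ))
  refine Measure.measurable_of_measurable_coe _ fun A hA => ?_
  have hQA : (fun p => splitQ P ν C δ p A) = fun p => if p.2 = true then ν A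
      else if p.1 ∈ C then (ENNReal.ofReal (1 - δ))⁻¹ * (P p.1 A - ENNReal.ofReal δ * ν A)
      else P p.1 A := by
    ext ⟨x, _ | _⟩
    · by_cases hx : x ∈ C
      · simp [splitQ_false_of_mem hx, Measure.sub_apply hA (hminor x hx), hx]
      · simp [splitQ_false_of_notMem hx, hx]
    · simp
  rw [hQA]
  refine Measurable.ite (measurable_snd (measurableSet_singleton true)) measurable_const ?_
  have hfalse : Measurable fun x => if x ∈ C then
      (ENNReal.ofReal (1 - δ))⁻¹ * (P x A - ENNReal.ofReal δ * ν A) else P x A :=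
    Measurable.ite hC (((P.measurable_coe hA).sub measurable_const).const_mul _)
      (P.measurable_coe hA)
  exact hfalse.comp measurable_fst

lemma measurable_splitKernel [IsFiniteMeasure ν] (hC : MeasurableSet C)
    (hminor : ∀ x ∈ C, ENNReal.ofReal δ • ν ≤ P x) : Measurable (splitKernel P ν C δ) := by
  refine Measure.measurable_of_measurable_coe _ fun S hS => ?_
  let κ : Kernel (X × Bool) X := ⟨splitQ P ν C δ, measurable_splitQ hC hminor⟩
  have hS' : Measurable (S.indicator (1 : X × Bool → ℝ≥0∞)) := measurable_one.indicator hS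
  have hκ : (fun p => splitKernel P ν C δ p S)
      = fun p => ∫⁻ y, splitAverage C δ (S.indicator 1) y ∂κ p := by
    ext p
    rw [← lintegral_indicator_one hS, splitKernel, lintegral_splitMeasure hC _ hS']
    rfl
  rw [hκ]
  exact (measurable_splitAverage hC hS').lintegral_kernel

lemma measurable_lintegral_splitQ [IsMarkovKernel P] [IsProbabilityMeasure ν]
    (hC : MeasurableSet C) (hδ0 : 0 ≤ δ) (hδ1 : δ < 1)
    (hminor : ∀ x ∈ C, ENNReal.ofReal δ • ν ≤ P x) {α : Type*} [MeasurableSpace α]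
    {f : α → X} (hf : Measurable f) {F : α → X → ℝ≥0∞} (hF : Measurable (Function.uncurry F)) :
    Measurable fun p : α × Bool => ∫⁻ y, F p.1 y ∂splitQ P ν C δ (f p.1, p.2) := by
  let κ : Kernel (X × Bool) X := ⟨splitQ P ν C δ, measurable_splitQ hC hminor⟩
  have : IsMarkovKernel κ := ⟨isProbabilityMeasure_splitQ hδ0 hδ1 hminor⟩
  exact Measurable.lintegral_kernel_prod_right (f := fun p y => F p.1 y)
    (κ := κ.comap (fun p : α × Bool => (f p.1, p.2)) (by fun_prop)) (by fun_prop)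

end SplitQ

section PathLaw

variable {P : Kernel X X} [IsMarkovKernel P] {ν : Measure X} [IsProbabilityMeasure ν]
  {C : Set X} {δ : ℝ} {Pr : X → Measure (ℕ → X)} {Prs : X × Bool → Measure (ℕ → X × Bool)}

lemma lintegral_splitChain_succ (hC : MeasurableSet C) (hδ0 : 0 ≤ δ) (hδ1 : δ < 1)
    (hminor : ∀ x ∈ C, ENNReal.ofReal δ • ν ≤ P x)
    (hchains : IsMarkovFamilyFun (splitKernel P ν C δ) Prs) (xs : X × Bool) (n : ℕ)
    {H : (Fin (n + 2) → X) → Bool → ℝ≥0∞} (hH : Measurable (Function.uncurry H)) :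
    ∫⁻ ω, H (fun i => (ω i).1) (ω (n + 1)).2 ∂Prs xs
      = ∫⁻ ω, ∫⁻ y, splitAverage C δ
          (fun z => H (Fin.snoc (fun i : Fin (n + 1) => (ω i).1) z.1) z.2) y
          ∂splitQ P ν C δ (ω n) ∂Prs xs := by
  have := isProbabilityMeasure_splitKernel hC hδ0 hδ1 hminor
  have hfst (w : Fin (n + 1) → X × Bool) (z : X × Bool) :
      (fun i => (Fin.snoc (α := fun _ => X × Bool) w z i).1) = Fin.snoc (fun i => (w i).1) z.1 :=
    Fin.comp_snoc Prod.fst w z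
  have step := hchains.lintegral_prefix_succ (measurable_splitKernel hC hminor) xs n
    (Φ := fun v => H (fun i => (v i).1) (v (Fin.last _)).2) (by fun_prop)
  simp only [Fin.val_last, Fin.snoc_last, hfst] at step
  rw [step]
  refine lintegral_congr fun ω => ?_
  exact lintegral_splitMeasure hC _ (by fun_prop)

/-- Stated under `λ*` rather than pointwise in the starting state: `Prs` need not be measurable
in its starting point, while `lintegral_splitMeasure` needs a measurable integrand. -/
theorem lintegral_splitMeasure_splitChain (hC : MeasurableSet C) (hδ0 : 0 ≤ δ) (hδ1 : δ < 1)
    (hminor : ∀ x ∈ C, ENNReal.ofReal δ • ν ≤ P x)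
    (hchain : IsMarkovFamilyFun (fun x => P x) Pr)
    (hchains : IsMarkovFamilyFun (splitKernel P ν C δ) Prs) (μ0 : Measure X) (n : ℕ)
    {H : (Fin (n + 1) → X) → Bool → ℝ≥0∞} (hH : Measurable (Function.uncurry H)) :
    ∫⁻ xs, ∫⁻ ω, H (fun i => (ω i).1) (ω n).2 ∂Prs xs ∂splitMeasure C δ μ0
      = ∫⁻ x, ∫⁻ ω, splitAverage C δ (fun p => H (fun i => ω i) p.2) (ω n) ∂Pr x ∂μ0 := by
  induction n with
  | zero =>
    have hH0 : Measurable fun p : X × Bool => H (fun _ => p.1) p.2 := by fun_prop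
    calc _ = ∫⁻ xs, H (fun _ => xs.1) xs.2 ∂splitMeasure C δ μ0 := by
          refine lintegral_congr fun xs => ?_
          simpa [Fin.val_eq_zero] using hchains.lintegral_comp_eval_zero xs hH0
      _ = ∫⁻ x, splitAverage C δ (fun p => H (fun _ => p.1) p.2) x ∂μ0 :=
          lintegral_splitMeasure hC μ0 hH0
      _ = _ := lintegral_congr fun x => by
          rw [← hchain.lintegral_comp_eval_zero x (measurable_splitAverage hC hH0)]
          simp only [Fin.val_eq_zero]
          rfl
  | succ n ih =>
    set H' : (Fin (n + 1) → X) → Bool → ℝ≥0∞ := fun w b =>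
      ∫⁻ y, splitAverage C δ (fun z => H (Fin.snoc w z.1) z.2) y
        ∂splitQ P ν C δ (w (Fin.last n), b)
    have hH' : Measurable (Function.uncurry H') :=
      measurable_lintegral_splitQ hC hδ0 hδ1 hminor
        (f := fun w : Fin (n + 1) → X => w (Fin.last n)) (by fun_prop)
        (measurable_uncurry_splitAverage hC (F := fun w z => H (Fin.snoc w z.1) z.2)
          (by fun_prop))
    calc _ = ∫⁻ xs, ∫⁻ ω, H' (fun i => (ω i).1) (ω n).2 ∂Prs xs ∂splitMeasure C δ μ0 :=
          lintegral_congr fun xs => lintegral_splitChain_succ hC hδ0 hδ1 hminor hchains xs n hH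
      _ = ∫⁻ x, ∫⁻ ω, splitAverage C δ (fun p => H' (fun i => ω i) p.2) (ω n) ∂Pr x ∂μ0 :=
          ih hH'
      _ = ∫⁻ x, ∫⁻ ω, ∫⁻ z, splitAverage C δ
            (fun p => H (Fin.snoc (fun i : Fin (n + 1) => ω i) z) p.2) z ∂P (ω n) ∂Pr x ∂μ0 :=
          lintegral_congr fun x => lintegral_congr fun ω =>
            splitAverage_lintegral_splitQ hδ1 hminor _ (ω n)
      _ = _ := by
          refine lintegral_congr fun x => ?_
          have hΦ : Measurable fun v : Fin (n + 2) → X =>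
              splitAverage C δ (fun p => H v p.2) (v (Fin.last _)) :=
            (measurable_uncurry_splitAverage hC (F := fun v p => H v p.2) (by fun_prop)).comp
              (f := fun v : Fin (n + 2) → X => (v, v (Fin.last _))) (by fun_prop)
          have step := hchain.lintegral_prefix_succ P.measurable x n hΦ
          simp only [Fin.val_last, Fin.snoc_last] at step
          exact step.symm

end PathLaw

lemma smul_le_of_minorization {P : Kernel X X} {ν : Measure X} {C : Set X} {δ : ℝ}
    (hδ0 : 0 ≤ δ) (hminor : ∀ x, ∀ A : Set X, MeasurableSet A →
      ENNReal.ofReal (2 * δ) * C.indicator 1 x * ν A ≤ P x A) :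
    ∀ x ∈ C, ENNReal.ofReal δ • ν ≤ P x := by
  intro x hx
  refine Measure.le_iff.2 fun A hA => le_trans ?_ (hminor x A hA)
  rw [Set.indicator_of_mem hx, Pi.one_apply, mul_one, Measure.smul_apply, smul_eq_mul]
  gcongr
  linarith

end SplitChain

open SplitChain in
theorem split_chain_first_component_general
    (P : Kernel X X) [IsMarkovKernel P]
    (C : Set X) (hC : MeasurableSet C)
    (ν : Measure X) [IsProbabilityMeasure ν]
    (δ : ℝ) (hδ0 : 0 < δ) (hδ : δ < 1 / 2)
    (hminor : ∀ x, ∀ A : Set X, MeasurableSet A →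
      ENNReal.ofReal (2 * δ) * C.indicator 1 x * ν A ≤ P x A)
    (Pr : X → Measure (ℕ → X))
    (hchain : IsMarkovFamilyFun (fun x => P x) Pr)
    (Prs : X × Bool → Measure (ℕ → X × Bool))
    (hchains : IsMarkovFamilyFun (splitKernel P ν C δ) Prs)
    (μ0 : Measure X) :
    ∀ n : ℕ, 1 ≤ n → ∀ G : (Fin n → X) → ENNReal, Measurable G →
      ∫⁻ x, (∫⁻ ω, G (fun i => ω (i.1 + 1)) ∂ Pr x) ∂ μ0
        = ∫⁻ xs, (∫⁻ ω, G (fun i => (ω (i.1 + 1)).1) ∂ Prs xs)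
            ∂ splitMeasure C δ μ0 := by
  intro n _ G hG
  have hδ1 : δ < 1 := by linarith
  have hsplit := lintegral_splitMeasure_splitChain hC hδ0.le hδ1
    (smul_le_of_minorization hδ0.le hminor) hchain hchains μ0 n
    (H := fun w _ => G fun i => w i.succ) (by fun_prop)
  simp only [splitAverage_const hδ0.le hδ1.le] at hsplit
  exact hsplit.symm

/-- the first-component path distribution of the split chain
started from `λ*` coincides with the path distribution of the original chain
started from `λ`: for every `n ≥ 1` and nonnegative measurable `G_n`,
`∫ E_x[G_n(Φ_1,…,Φ_n)] λ(dx) = ∫ Ě_{xs}[G_n(φ̌_1,…,φ̌_n)] λ*(dxs)`. -/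
theorem split_chain_first_component
    (P : Kernel X X) [IsMarkovKernel P]
    (C : Set X) (hC : MeasurableSet C)
    (ν : Measure X) [IsProbabilityMeasure ν] (hνC : ν C = 1)
    (δ : ℝ) (hδ0 : 0 < δ) (hδ : δ < 1 / 2)
    (hminor : ∀ x, ∀ A : Set X, MeasurableSet A →
      ENNReal.ofReal (2 * δ) * C.indicator 1 x * ν A ≤ P x A)
    (Pr : X → Measure (ℕ → X))
    (hchain : IsMarkovFamilyFun (fun x => P x) Pr)
    (Prs : X × Bool → Measure (ℕ → X × Bool))
    (hchains : IsMarkovFamilyFun (splitKernel P ν C δ) Prs)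
    (μ0 : Measure X) :
    ∀ n : ℕ, 1 ≤ n → ∀ G : (Fin n → X) → ENNReal, Measurable G →
      ∫⁻ x, (∫⁻ ω, G (fun i => ω (i.1 + 1)) ∂ Pr x) ∂ μ0
        = ∫⁻ xs, (∫⁻ ω, G (fun i => (ω (i.1 + 1)).1) ∂ Prs xs)
            ∂ splitMeasure C δ μ0 :=
  split_chain_first_component_general P C hC ν δ hδ0 hδ hminor Pr hchain Prs hchains μ0
end

section
/- Let V(x) = (1+x²)^ε with 0 < ε ≤ 1, and let σ: ℝ → ℝ satisfy 0 < σ_0 ≤ σ(x) ≤ σ_1. For constants M > 0, a > 0, L ≥ 1, let Σ be the class of C¹ functions S with sup_{|x|≤a}|S(x)| ≤ M, inf_{|x|≥a} S'(x) ≥ −L, and sup_{|x|≥a} S'(x) ≤ −1/L. Then there exists β > 0 (depending only on M, a, L, σ_1, ε) such that for all S ∈ Σ and all x ∈ ℝ: V'(x)S(x) + (σ²(x)/2)V''(x) ≤ −(ε/(2L))·V(x) + β. -/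
/-!
Write `u = 1 + x²`, so `V' = 2εx u^(ε-1)` and `V = u^(ε-1) u`. As `ε ≤ 1`, the `ε(ε-1)` term of
`V''` is nonpositive and the other one is `2ε u^(ε-1) ≤ 2`, so `(σ²/2) V'' ≤ σ₁²`. Next,
`V'S + (ε/2L) V = ε u^(ε-1) (2xS(x) + u/(2L))` with `ε u^(ε-1) ∈ [0, 1]`, so it is enough to bound
`2xS(x) + u/(2L)` by a constant. Integrating `S' ≤ -1/L` from `±a` outwards gives
`xS(x) ≤ -x²/L + (M + a/L)|x| + aM` on all of `ℝ`, and the `-x²/L` dominates `x²/(2L)`.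
-/

open Set

lemma hasDerivAt_one_add_sq_rpow (p x : ℝ) :
    HasDerivAt (fun y : ℝ => (1 + y ^ 2) ^ p) (2 * p * x * (1 + x ^ 2) ^ (p - 1)) x := by
  have h := ((hasDerivAt_pow 2 x).const_add 1).rpow_const (p := p) (Or.inl (by positivity))
  convert h using 1
  ring

lemma deriv_one_add_sq_rpow (p : ℝ) :
    deriv (fun y : ℝ => (1 + y ^ 2) ^ p) = fun x => 2 * p * x * (1 + x ^ 2) ^ (p - 1) :=
  funext fun x => (hasDerivAt_one_add_sq_rpow p x).deriv

lemma deriv_deriv_one_add_sq_rpow (p x : ℝ) :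
    deriv (deriv fun y : ℝ => (1 + y ^ 2) ^ p) x
      = 2 * p * (1 + x ^ 2) ^ (p - 1) + 4 * p * (p - 1) * x ^ 2 * (1 + x ^ 2) ^ (p - 2) := by
  have h : HasDerivAt (fun y => 2 * p * y * (1 + y ^ 2) ^ (p - 1)) _ x :=
    ((hasDerivAt_id' x).const_mul (2 * p)).mul (hasDerivAt_one_add_sq_rpow (p - 1) x)
  rw [deriv_one_add_sq_rpow, h.deriv, show p - 1 - 1 = p - 2 by ring]
  ring

lemma deriv_deriv_one_add_sq_rpow_le_two {p : ℝ} (hp0 : 0 ≤ p) (hp1 : p ≤ 1) (x : ℝ) :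
    deriv (deriv fun y : ℝ => (1 + y ^ 2) ^ p) x ≤ 2 := by
  have hu : 1 ≤ 1 + x ^ 2 := by nlinarith [sq_nonneg x]
  have hP0 : 0 ≤ (1 + x ^ 2) ^ (p - 1) := by positivity
  have hP1 : (1 + x ^ 2) ^ (p - 1) ≤ 1 := Real.rpow_le_one_of_one_le_of_nonpos hu (by linarith)
  have hQ0 : 0 ≤ (1 + x ^ 2) ^ (p - 2) := by positivity
  rw [deriv_deriv_one_add_sq_rpow]
  nlinarith [mul_nonneg (mul_nonneg hp0 (sub_nonneg.2 hp1)) (mul_nonneg (sq_nonneg x) hQ0),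
    mul_nonneg (sub_nonneg.2 hp1) hP0]

lemma deriv_one_add_sq_rpow_mul_le {p c K s x : ℝ} (hp0 : 0 ≤ p) (hp1 : p ≤ 1) (hK : 0 ≤ K)
    (h : 2 * x * s + c * (1 + x ^ 2) ≤ K) :
    deriv (fun y : ℝ => (1 + y ^ 2) ^ p) x * s ≤ -(p * c) * (1 + x ^ 2) ^ p + K := by
  have hu : 1 ≤ 1 + x ^ 2 := by nlinarith [sq_nonneg x]
  have hP0 : 0 ≤ p * (1 + x ^ 2) ^ (p - 1) := by positivity
  have hP1 : p * (1 + x ^ 2) ^ (p - 1) ≤ 1 :=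
    mul_le_one₀ hp1 (by positivity) (Real.rpow_le_one_of_one_le_of_nonpos hu (by linarith))
  have hV : (1 + x ^ 2) ^ p = (1 + x ^ 2) ^ (p - 1) * (1 + x ^ 2) := by
    rw [Real.rpow_sub_one (by positivity), div_mul_cancel₀ _ (by positivity)]
  rw [deriv_one_add_sq_rpow, hV]
  nlinarith [mul_le_mul_of_nonneg_left h hP0, mul_le_mul_of_nonneg_right hP1 hK]

lemma le_sub_mul_of_deriv_le_neg {S : ℝ → ℝ} {a c x : ℝ} (hS : Differentiable ℝ S)
    (hd : ∀ t, a < t → deriv S t ≤ -c) (hx : a ≤ x) : S x ≤ S a - c * (x - a) := by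
  have hderiv (t : ℝ) : HasDerivAt (fun t => S t + c * t) (deriv S t + c * 1) t :=
    (hS t).hasDerivAt.add ((hasDerivAt_id t).const_mul c)
  have hanti : AntitoneOn (fun t => S t + c * t) (Ici a) := by
    refine antitoneOn_of_deriv_nonpos (convex_Ici a) (hS.continuous.continuousOn.add (by fun_prop))
      (by fun_prop) fun t ht => ?_
    rw [interior_Ici] at ht
    rw [(hderiv t).deriv]
    linarith [hd t ht]
  linarith [hanti self_mem_Ici hx hx]

lemma add_mul_le_of_deriv_le_neg {S : ℝ → ℝ} {b c x : ℝ} (hS : Differentiable ℝ S)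
    (hd : ∀ t, t < b → deriv S t ≤ -c) (hx : x ≤ b) : S b + c * (b - x) ≤ S x := by
  have hreflect (t : ℝ) : deriv (fun t => -S (-t)) t = deriv S (-t) := by
    rw [deriv.fun_neg, deriv_comp_neg, neg_neg]
  have h := le_sub_mul_of_deriv_le_neg (S := fun t => -S (-t)) (a := -b) (x := -x) (by fun_prop)
    (fun t ht => by rw [hreflect]; exact hd _ (by linarith)) (by linarith)
  simp only [neg_neg] at h
  linarith

lemma mul_apply_le_of_deriv_le_neg {S : ℝ → ℝ} {M a c : ℝ} (ha : 0 ≤ a) (hc : 0 ≤ c)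
    (hS : Differentiable ℝ S) (hbound : ∀ x, |x| ≤ a → |S x| ≤ M)
    (hd : ∀ x, a ≤ |x| → deriv S x ≤ -c) (x : ℝ) :
    x * S x ≤ -c * x ^ 2 + (M + a * c) * |x| + a * M := by
  have hM : 0 ≤ M := (abs_nonneg _).trans (hbound 0 (by simpa using ha))
  rcases le_or_gt |x| a with hxa | hxa
  · have hxS : x * S x ≤ a * M :=
      calc x * S x ≤ |x| * |S x| := by rw [← abs_mul]; exact le_abs_self _
        _ ≤ a * M := mul_le_mul hxa (hbound x hxa) (abs_nonneg _) ha
    nlinarith [sq_abs x, abs_nonneg x, mul_nonneg (mul_nonneg hc (abs_nonneg x)) (sub_nonneg.2 hxa),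
      mul_nonneg hM (abs_nonneg x)]
  rcases le_or_gt a x with hax | hxneg
  · have hSx := le_sub_mul_of_deriv_le_neg hS (fun t ht => hd t (by
      rw [abs_of_pos (by linarith)]; linarith)) hax
    have hSa := (abs_le.1 (hbound a (by rw [abs_of_nonneg ha]))).2
    rw [abs_of_nonneg (by linarith)]
    nlinarith [mul_le_mul_of_nonneg_left hSx (by linarith : 0 ≤ x), mul_nonneg ha hM]
  · have hxb : x ≤ -a := by rcases abs_cases x with ⟨h, _⟩ | ⟨h, _⟩ <;> linarith
    have hSx := add_mul_le_of_deriv_le_neg hS (fun t ht => hd t (by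
      rw [abs_of_neg (by linarith)]; linarith)) hxb
    have hSa := (abs_le.1 (hbound (-a) (by rw [abs_neg, abs_of_nonneg ha]))).1
    rw [abs_of_neg (by linarith)]
    nlinarith [mul_le_mul_of_nonpos_left hSx (by linarith : x ≤ 0), mul_nonneg ha hM]

lemma two_mul_mul_apply_add_le {S : ℝ → ℝ} {M a c : ℝ} (ha : 0 ≤ a) (hc0 : 0 < c) (hc1 : c ≤ 1)
    (hS : Differentiable ℝ S) (hbound : ∀ x, |x| ≤ a → |S x| ≤ M)
    (hd : ∀ x, a ≤ |x| → deriv S x ≤ -c) (x : ℝ) :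
    2 * x * S x + c / 2 * (1 + x ^ 2) ≤ (M + a * c) ^ 2 / c + 2 * a * M + 1 / 2 := by
  have hxS := mul_apply_le_of_deriv_le_neg ha hc0.le hS hbound hd x
  set C := M + a * c
  have hamgm : 2 * C * |x| ≤ C ^ 2 / c + c * x ^ 2 := by
    refine le_of_mul_le_mul_right ?_ hc0
    rw [add_mul, div_mul_cancel₀ _ hc0.ne']
    have h := sq_nonneg (C - c * |x|)
    rw [sub_sq, mul_pow, sq_abs] at h
    nlinarith [h]
  nlinarith [mul_nonneg hc0.le (sq_nonneg x)]

/-- `V(x) = (1+x²)^ε` is a uniform Lyapunov function for the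
diffusion generator over the drift class `Σ_{M,a,L}`: there is `β > 0`,
depending only on `M, a, L, σ₁, ε`, with
`V'S + (σ²/2)V'' ≤ −(ε/(2L))V + β` for all `S ∈ Σ` and all `x`. -/
theorem uniform_lyapunov_for_diffusion
    (M a L ε : ℝ) (hM : 0 < M) (ha : 0 < a) (hL : 1 ≤ L)
    (hε0 : 0 < ε) (hε1 : ε ≤ 1)
    (σ : ℝ → ℝ) (σ0 σ1 : ℝ) (hσ0 : 0 < σ0)
    (hσ : ∀ x, σ0 ≤ σ x ∧ σ x ≤ σ1) :
    ∃ β : ℝ, 0 < β ∧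
      ∀ S : ℝ → ℝ, ContDiff ℝ 1 S →
        (∀ x, |x| ≤ a → |S x| ≤ M) →
        (∀ x, a ≤ |x| → -L ≤ deriv S x) →
        (∀ x, a ≤ |x| → deriv S x ≤ -(1 / L)) →
        ∀ x : ℝ,
          deriv (fun y => (1 + y ^ 2) ^ ε) x * S x
              + σ x ^ 2 / 2 * deriv (deriv fun y => (1 + y ^ 2) ^ ε) x
            ≤ -(ε / (2 * L)) * (1 + x ^ 2) ^ ε + β := by
  have hL0 : 0 < L := by linarith
  have hc0 : 0 < 1 / L := by positivity
  have hc1 : 1 / L ≤ 1 := (div_le_one hL0).2 hL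
  refine ⟨(M + a * (1 / L)) ^ 2 / (1 / L) + 2 * a * M + 1 / 2 + σ1 ^ 2, by positivity, ?_⟩
  intro S hS hbound _ hdecay x
  have hdrift := deriv_one_add_sq_rpow_mul_le hε0.le hε1 (by positivity)
    (two_mul_mul_apply_add_le ha.le hc0 hc1 (hS.differentiable one_ne_zero) hbound hdecay x)
  rw [show ε * (1 / L / 2) = ε / (2 * L) by ring] at hdrift
  have hσx : σ x ^ 2 ≤ σ1 ^ 2 := pow_le_pow_left₀ (hσ0.le.trans (hσ x).1) (hσ x).2 2
  have hdiffusion := mul_le_mul_of_nonneg_left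
    (deriv_deriv_one_add_sq_rpow_le_two hε0.le hε1 x) (by positivity : 0 ≤ σ x ^ 2 / 2)
  linarith
end
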